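/- arXiv:2506.14216 — 15 statements merged into one kernel-verified Lean document; each statement's English description precedes it below -/
import Mathlib

section
/- Let (S,·,∗) be an associative pentagon algebra. Then for all x,y,z,w ∈ S, (x·y)∗(z∗w) = y∗(z∗(x∗((y·z)∗w))), i.e., θ_{x·y}∘θ_z = θ_y∘θ_z∘θ_x∘θ_{y·z}. -/
theorem stmt1 {S : Type*} (m s : S → S → S)
    (hm : ∀ a b c : S, m (m a b) c = m a (m b c))
    (hs : ∀ a b c : S, s (s a b) c = s a (s b c))
    (hI : ∀ a b c : S, m (s a b) (s (m a b) c) = s a (m b c))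
    (hII : ∀ a b c : S, s (s a b) (s (m a b) c) = s b c) :
    ∀ x y z w : S, s (m x y) (s z w) = s y (s z (s x (s (m y z) w))) := by
  intro x y z w
  have h := hII (s x y) (s (m x y) z) w
  rw [hII x y z, hI x y z, hs, hs, hs] at h
  exact h.symm
end

section
/- Let (S,·) be a semigroup. Then (S,·,·) is an associative pentagon algebra (with ∗ taken equal to ·) if and only if for all x,y,z ∈ S, x·y·z = y·z. -/
theorem stmt2 {S : Type*} (m : S → S → S)
    (hm : ∀ a b c : S, m (m a b) c = m a (m b c)) :
    ((∀ a b c : S, m (m a b) (m (m a b) c) = m a (m b c)) ∧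
     (∀ a b c : S, m (m a b) (m (m a b) c) = m b c)) ↔
    (∀ x y z : S, m (m x y) z = m y z) := by
  constructor
  · rintro ⟨h1, h2⟩ x y z
    rw [hm, ← h1 x y z, h2]
  · intro h
    constructor
    · intro a b c
      rw [h a b, h a b c, ← hm b b c, h b b, ← hm a b c, h a b]
    · intro a b c
      rw [h a b, h a b c, ← hm b b c, h b b]
end

section
/- Let (S,·) be a semigroup and γ : S → S a map, and define x ∗ y := γ(y) for all x,y ∈ S. Then (S,·,∗) is an associative pentagon algebra if and only if γ is an endomorphism of (S,·) and γ∘γ = γ. -/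
theorem stmt3 {S : Type*} (m : S → S → S) (γ : S → S)
    (s : S → S → S) (hdef : ∀ x y : S, s x y = γ y)
    (hm : ∀ a b c : S, m (m a b) c = m a (m b c)) :
    ((∀ a b c : S, s (s a b) c = s a (s b c)) ∧
     (∀ a b c : S, m (s a b) (s (m a b) c) = s a (m b c)) ∧
     (∀ a b c : S, s (s a b) (s (m a b) c) = s b c)) ↔
    ((∀ x y : S, γ (m x y) = m (γ x) (γ y)) ∧ (∀ x : S, γ (γ x) = γ x)) := by
  simp only [hdef]
  constructor
  · rintro ⟨h1, h2, h3⟩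
    exact ⟨fun x y => (h2 x x y).symm, fun x => h3 x x x⟩
  · rintro ⟨h1, h2⟩
    exact ⟨fun a b c => (h2 c).symm, fun a b c => (h1 b c).symm, fun a b c => h2 c⟩
end

section
/- Let (S,·,∗) be an associative pentagon algebra. Then for every x ∈ S and every ·-idempotent e ∈ S (i.e. e·e = e), the element (x·e)∗e is a ·-idempotent. -/
theorem stmt5 {S : Type*} (m s : S → S → S)
    (hm : ∀ a b c : S, m (m a b) c = m a (m b c))
    (hs : ∀ a b c : S, s (s a b) c = s a (s b c))
    (hI : ∀ a b c : S, m (s a b) (s (m a b) c) = s a (m b c))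
    (hII : ∀ a b c : S, s (s a b) (s (m a b) c) = s b c) :
    ∀ x e : S, m e e = e → m (s (m x e) e) (s (m x e) e) = s (m x e) e := by
  intro x e he
  have hy : m (m x e) e = m x e := by rw [hm, he]
  have h := hI (m x e) e e
  rw [hy, he] at h
  exact h
end

section
/- Let (S,·,∗) be an associative pentagon algebra, e ∈ S with e·e = e, and x ∈ S. Then θ_e = θ_{e·x·e}, i.e., for all z ∈ S, e∗z = ((e·x)·e)∗z. -/
theorem stmt7 {S : Type*} (m s : S → S → S)
    (hm : ∀ a b c : S, m (m a b) c = m a (m b c))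
    (hs : ∀ a b c : S, s (s a b) c = s a (s b c))
    (hI : ∀ a b c : S, m (s a b) (s (m a b) c) = s a (m b c))
    (hII : ∀ a b c : S, s (s a b) (s (m a b) c) = s b c) :
    ∀ e x : S, m e e = e → ∀ z : S, s e z = s (m (m e x) e) z := by
  intro e x he z
  set w := m (m e x) e with hw
  have hwe : m w e = w := by rw [hw, hm, he]
  have hew : m e w = w := by rw [hw, ← hm, ← hm, he]
  -- L1 : s e (s w (s w z)) = s w z
  have L1 : ∀ t : S, s e (s w (s w t)) = s w t := by
    intro t
    have := hII e w t
    rwa [hew, hs] at this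
  -- L2 : s w (s e (s w t)) = s e t
  have L2 : ∀ t : S, s w (s e (s w t)) = s e t := by
    intro t
    have := hII w e t
    rwa [hwe, hs] at this
  -- L3 : s e (s w t) = s w (s w t)
  have L3 : ∀ t : S, s e (s w t) = s w (s w t) := by
    intro t
    have h2 := L2 (s w t)
    rw [L1 t] at h2
    exact h2.symm
  -- L4 : s w (s w (s w t)) = s w t
  have L4 : ∀ t : S, s w (s w (s w t)) = s w t := by
    intro t
    rw [← L3 (s w t), L1]
  calc s e z = s w (s e (s w z)) := (L2 z).symm
    _ = s w (s w (s w z)) := by rw [L3]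
    _ = s w z := L4 z
end

section
/- Let (S,·,∗) be an associative pentagon algebra such that (S,·) is a monoid with identity 1. Then for all x,y ∈ S, x∗y = 1∗y, i.e., the semigroup (S,∗) is determined by the single map θ_1. -/
theorem stmt8 {S : Type*} (m s : S → S → S) (one : S)
    (hm : ∀ a b c : S, m (m a b) c = m a (m b c))
    (hs : ∀ a b c : S, s (s a b) c = s a (s b c))
    (hI : ∀ a b c : S, m (s a b) (s (m a b) c) = s a (m b c))
    (hII : ∀ a b c : S, s (s a b) (s (m a b) c) = s b c)
    (h1l : ∀ x : S, m one x = x) (h1r : ∀ x : S, m x one = x) :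
    ∀ x y : S, s x y = s one y := by
  -- star1 : L_a ∘ P ∘ L_a = P
  have star1 : ∀ a c : S, s a (s one (s a c)) = s one c := by
    intro a c
    have h := hII a one c
    rw [h1r, hs] at h
    exact h
  -- star2 : P ∘ L_a ∘ L_a = L_a
  have star2 : ∀ a c : S, s one (s a (s a c)) = s a c := by
    intro a c
    have h := hII one a c
    rw [h1l, hs] at h
    exact h
  -- A : P ∘ L_a ∘ P = P
  have A : ∀ a c : S, s one (s a (s one c)) = s one c := by
    intro a c
    have h1 : s a (s one (s a c)) = s one c := star1 a c
    have h2 := star2 a (s one (s a c))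
    rw [h1] at h2
    exact h2
  -- D : P ∘ P = L_a ∘ P
  have D : ∀ a c : S, s one (s one c) = s a (s one c) := by
    intro a c
    have hsub1 : s (s a one) (s a one) = s one one := by
      have h := hII a one one
      rw [h1r] at h
      exact h
    have hsub2 : m (s a one) (s a one) = s a one := by
      have h := hI a one one
      rw [h1r a, h1l one] at h
      exact h
    have h := hII (s a one) (s a one) c
    rw [hsub2, hsub1] at h
    simp only [hs] at h
    rw [A a c] at h
    exact h
  -- E : P ∘ P ∘ L_a = P
  have E : ∀ a c : S, s one (s one (s a c)) = s one c := by
    intro a c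
    have h := star1 a c
    rw [← D a (s a c)] at h
    exact h
  -- P ∘ P ∘ P = P
  have P3 : ∀ c : S, s one (s one (s one c)) = s one c := fun c => E one c
  -- F : P ∘ L_a = P ∘ P
  have F : ∀ a c : S, s one (s a c) = s one (s one c) := by
    intro a c
    have h := (P3 (s a c)).symm
    rw [E a c] at h
    exact h
  intro x y
  calc s x y = s one (s x (s x y)) := (star2 x y).symm
    _ = s one (s one (s x y)) := F x (s x y)
    _ = s one (s one (s one y)) := by rw [F x y]
    _ = s one y := P3 y
end

section
/- Let (S,∗) be a right-normal semigroup satisfying the identity x∗y^k∗z = x∗z for all x,y,z (a P_k-semigroup in the variety V_{P_k}), where y^k is the k-th ∗-power. Then for all x,y,z ∈ S, x^k∗z = y^k∗z = z^{k+1}. -/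
def spow {S : Type*} (s : S → S → S) (x : S) : ℕ → S
  | 0 => x
  | n + 1 => s x (spow s x n)

lemma spow_mul_self {S : Type*} (s : S → S → S)
    (hs : ∀ a b c : S, s (s a b) c = s a (s b c)) (z : S) :
    ∀ n : ℕ, s (spow s z n) z = spow s z (n + 1)
  | 0 => rfl
  | n + 1 => by
    show s (s z (spow s z n)) z = s z (spow s z (n+1))
    rw [hs, spow_mul_self s hs z n]

theorem stmt9 {S : Type*} (s : S → S → S) (k : ℕ) (hk : 0 < k)
    (hs : ∀ a b c : S, s (s a b) c = s a (s b c))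
    (hrn : ∀ a b c : S, s a (s b c) = s b (s a c))
    (hPk : ∀ x y z : S, s x (s (spow s y (k - 1)) z) = s x z) :
    ∀ x y z : S, s (spow s x (k - 1)) z = s (spow s y (k - 1)) z ∧
      s (spow s x (k - 1)) z = spow s z k := by
  have key : ∀ x y z : S, s (spow s x (k - 1)) z = s (spow s y (k - 1)) z := by
    intro x y z
    have h1 := hPk (spow s x (k-1)) y z
    have h2 := hPk (spow s y (k-1)) x z
    rw [hrn] at h1
    rw [h2] at h1
    exact h1.symm
  intro x y z
  refine ⟨key x y z, ?_⟩
  have := key x z z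
  rw [spow_mul_self s hs z (k-1), Nat.sub_add_cancel hk] at this
  exact this
end

section
/- Let (S,·,∗) be a left-trivially distributive associative pentagon algebra, i.e., (x·y)∗z = x∗z for all x,y,z ∈ S. Then each left translation θ_x : y ↦ x∗y is an endomorphism of the semigroup (S,·), and the left translations commute: θ_x∘θ_y = θ_y∘θ_x for all x,y ∈ S (equivalently (S,∗) is right-normal). -/
theorem stmt10 {S : Type*} (m s : S → S → S)
    (hm : ∀ a b c : S, m (m a b) c = m a (m b c))
    (hs : ∀ a b c : S, s (s a b) c = s a (s b c))
    (hI : ∀ a b c : S, m (s a b) (s (m a b) c) = s a (m b c))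
    (hII : ∀ a b c : S, s (s a b) (s (m a b) c) = s b c)
    (hLTD : ∀ x y z : S, s (m x y) z = s x z) :
    (∀ x a b : S, s x (m a b) = m (s x a) (s x b)) ∧
    (∀ x y z : S, s x (s y z) = s y (s x z)) := by
  -- key identity (*): s a (s b (s a c)) = s b c
  have star : ∀ a b c : S, s a (s b (s a c)) = s b c := by
    intro a b c
    have := hII a b c
    rwa [hLTD, hs] at this
  constructor
  · intro x a b
    have := hI x a b
    rw [hLTD] at this; exact this.symm
  · intro x y z
    have h1 : s y z = s x (s y (s x z)) := (star x y z).symm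
    calc s x (s y z) = s x (s x (s y (s x z))) := by rw [← h1]
      _ = s y (s y (s y (s x z))) := by
            -- T c := s a (s a c) is independent of a
            have hT : ∀ a b c : S, s a (s a c) = s b (s b c) := by
              intro a b c
              have h2 := star b a (s a c)
              rw [star a b c] at h2
              exact h2.symm
            exact hT x y (s y (s x z))
      _ = s y (s x z) := star y y (s x z)
end

section
/- Let (S,·,∗) be an associative pentagon algebra whose transformation semigroup T(S) = {θ_x : x ∈ S} (under composition) is cancellative. Then (S,·,∗) is left-trivially distributive: (x·y)∗z = x∗z for all x,y,z ∈ S. -/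
theorem stmt11 {S : Type*} (m s : S → S → S)
    (hm : ∀ a b c : S, m (m a b) c = m a (m b c))
    (hs : ∀ a b c : S, s (s a b) c = s a (s b c))
    (hI : ∀ a b c : S, m (s a b) (s (m a b) c) = s a (m b c))
    (hII : ∀ a b c : S, s (s a b) (s (m a b) c) = s b c)
    (hc1 : ∀ a b c : S, (∀ y : S, s a (s c y) = s b (s c y)) → ∀ y : S, s a y = s b y)
    (hc2 : ∀ a b c : S, (∀ y : S, s c (s a y) = s c (s b y)) → ∀ y : S, s a y = s b y) :
    ∀ x y z : S, s (m x y) z = s x z := by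
  -- E : θ_a θ_b θ_{m a b} = θ_b
  have hE : ∀ a b y : S, s a (s b (s (m a b) y)) = s b y := by
    intro a b y
    rw [← hs, hII]
  -- Diamond : θ_c θ_{m a (s b c)} = θ_{m a b} θ_c
  have hD : ∀ a b c y : S, s c (s (m a (s b c)) y) = s (m a b) (s c y) := by
    intro a b c
    have L1 : ∀ y : S, s a (s b (s c (s (m a (s b c)) y))) = s b (s c y) := by
      intro y
      have h := hE a (s b c) y
      simp only [hs] at h
      exact h
    have L2 : ∀ y : S, s a (s b (s (m a b) (s c y))) = s b (s c y) := fun y => hE a b (s c y)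
    have h3 := hc2 (s b (s c (m a (s b c)))) (s b (s (m a b) c)) a (fun y => by
      simp only [hs]; exact (L1 y).trans (L2 y).symm)
    have h4 := hc2 (s c (m a (s b c))) (s (m a b) c) b (fun y => by
      simp only [hs]; have := h3 y; simp only [hs] at this; exact this)
    intro y
    have := h4 y
    simp only [hs] at this
    exact this
  -- commutativity of translations
  have hComm : ∀ a d y : S, s a (s d y) = s d (s a y) := by
    intro a d
    have hA : ∀ y : S, s d (s a (s (m a (s a d)) y)) = s a (s (m a a) (s d y)) := by
      intro y
      have h := hD (s a a) (s (m a a) a) d y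
      rw [hs (m a a) a d] at h
      rw [hI a a (s a d)] at h
      rw [hI a a a] at h
      simp only [hs] at h
      exact h
    have hB : ∀ y : S, s a (s d (s (m a (s a d)) y)) = s d (s a (s (m a (s a d)) y)) := by
      intro y
      rw [hA y, hD a a d y]
    have hcc := hc1 (s a d) (s d a) (m a (s a d)) (fun y => by
      simp only [hs]; exact hB y)
    intro y
    have := hcc y
    simp only [hs] at this
    exact this
  -- M1 : θ_{m a (s b c)} = θ_{m a b}
  have hM1 : ∀ a b c y : S, s (m a (s b c)) y = s (m a b) y := by
    intro a b c
    apply hc2 _ _ c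
    intro y
    rw [hD a b c y]
    exact hComm (m a b) c y
  -- key : θ_a θ_{m b c} = θ_{m (s a b) (m a b)}
  have hKey : ∀ a b c y : S, s a (s (m b c) y) = s (m (s a b) (m a b)) y := by
    intro a b c y
    rw [← hs, ← hI a b c]
    exact hM1 (s a b) (m a b) c y
  -- M2 : θ_{m b c} does not depend on c
  have hM2 : ∀ b c c' y : S, s (m b c) y = s (m b c') y := fun b c c' =>
    hc2 (m b c) (m b c') b (fun y => (hKey b b c y).trans (hKey b b c' y).symm)
  -- ID : θ_a θ_{m a b} acts as the identity
  have hID : ∀ a b c y : S, s c (s a (s (m a b) y)) = s c y := by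
    intro a b c y
    rw [hM2 a b c y]
    rw [← hComm a c (s (m a c) y)]
    exact hE a c y
  -- M3
  have hM3 : ∀ a b w y : S, s (m (s a b) w) y = s a (s (m b w) y) := by
    intro a b w y
    rw [hKey a b w]
    exact hM2 (s a b) w (m a b) y
  -- SQ : θ_a θ_a acts as the identity
  have hSQ : ∀ a c y : S, s c (s a (s a y)) = s c y := by
    intro a c y
    have h1 := hID (s a a) a c y
    rw [hM3 a a a y] at h1
    simp only [hs] at h1
    have h2 := hID a a (s (s c a) a) y
    simp only [hs] at h2
    exact h2.symm.trans h1
  -- conclusion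
  intro x y
  have hB : ∀ z : S, s (s x (m x y)) z = s (s x x) z :=
    hc2 _ _ x (fun z => by
      simp only [hs]; exact (hID x y x z).trans (hSQ x x z).symm)
  exact hc2 (m x y) x x (fun z => by have := hB z; simp only [hs] at this; exact this)
end

section
/- An associative pentagon algebra (S,·,∗) is left-trivially distributive (i.e., (x·y)∗z = x∗z for all x,y,z) if and only if (S,∗) is right-normal and satisfies x∗y∗y∗z = x∗z for all x,y,z ∈ S (i.e., (S,∗) is a right-normal P_2-semigroup). -/
theorem stmt12 {S : Type*} (m s : S → S → S)
    (hm : ∀ a b c : S, m (m a b) c = m a (m b c))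
    (hs : ∀ a b c : S, s (s a b) c = s a (s b c))
    (hI : ∀ a b c : S, m (s a b) (s (m a b) c) = s a (m b c))
    (hII : ∀ a b c : S, s (s a b) (s (m a b) c) = s b c) :
    (∀ x y z : S, s (m x y) z = s x z) ↔
    ((∀ x y z : S, s x (s y z) = s y (s x z)) ∧
     (∀ x y z : S, s x (s y (s y z)) = s x z)) := by
  constructor
  · intro h
    have A : ∀ a b c : S, s a (s b (s a c)) = s b c := by
      intro a b c
      have h2 := hII a b c
      rw [h a b c, hs] at h2
      exact h2
    have T : ∀ a c : S, s a (s a (s a c)) = s a c := fun a c => A a a c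
    have eLeft : ∀ x y c : S, s x (s x (s y c)) = s y c := by
      intro x y c
      have e1 : s x (s x (s y (s x (s x c)))) = s y c := by
        rw [A x y (s x c)]; exact A x y c
      calc s x (s x (s y c))
          = s x (s x (s x (s x (s y (s x (s x c)))))) := by rw [e1]
        _ = s x (s x (s y (s x (s x c)))) := by
              rw [T x (s x (s y (s x (s x c))))]
        _ = s y c := e1
    have P2 : ∀ x y c : S, s x (s y (s y c)) = s x c := by
      intro x y c
      have e1 : s y (s y (s x (s y (s y c)))) = s x c := by
        rw [A y x (s y c)]; exact A y x c
      have e2 := eLeft y x (s y (s y c))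
      rw [e2] at e1
      exact e1
    have RN : ∀ x y c : S, s x (s y c) = s y (s x c) := by
      intro x y c
      have h1 : s y (s y (s x (s y c))) = s x (s y c) := eLeft y x (s y c)
      rw [A y x c] at h1
      exact h1.symm
    exact ⟨RN, P2⟩
  · rintro ⟨hrn, hp2⟩ x y z
    have sq : ∀ a b c : S, s a (s a (s b c)) = s b c := by
      intro a b c
      rw [hrn a b c, hrn a b (s a c)]
      exact hp2 b a c
    have key := hII x y z
    rw [hs] at key
    calc s (m x y) z
        = s y (s y (s (m x y) z)) := (sq y (m x y) z).symm
      _ = s y (s x (s x (s y (s (m x y) z)))) := by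
            rw [sq x y (s (m x y) z)]
      _ = s y (s x (s y z)) := by rw [key]
      _ = s y (s y (s x z)) := by rw [hrn x y z]
      _ = s x z := sq y x z
end

section
/- Let (S,·,∗) be an algebra where (S,·) and (S,∗) are both semigroups satisfying (x·y)∗z = x∗z for all x,y,z. Then (S,·,∗) is an associative pentagon algebra if and only if (S,∗) is right-normal with x∗y∗y∗z = x∗z for all x,y,z, and every left translation θ_x : y ↦ x∗y is an endomorphism of (S,·). -/
theorem stmt13 {S : Type*} (m s : S → S → S)
    (hm : ∀ a b c : S, m (m a b) c = m a (m b c))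
    (hs : ∀ a b c : S, s (s a b) c = s a (s b c))
    (hLTD : ∀ x y z : S, s (m x y) z = s x z) :
    ((∀ a b c : S, m (s a b) (s (m a b) c) = s a (m b c)) ∧
     (∀ a b c : S, s (s a b) (s (m a b) c) = s b c)) ↔
    ((∀ x y z : S, s x (s y z) = s y (s x z)) ∧
     (∀ x y z : S, s x (s y (s y z)) = s x z) ∧
     (∀ x a b : S, s x (m a b) = m (s x a) (s x b))) := by
  constructor
  · rintro ⟨h1, h2⟩
    have E : ∀ a b c : S, s a (s b (s a c)) = s b c := by
      intro a b c
      have h := h2 a b c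
      rw [hLTD, hs] at h
      exact h
    have comm : ∀ a b c : S, s a (s b c) = s b (s a c) := by
      intro a b c
      have h3 := E (s a b) (s a b) c
      simp only [hs] at h3
      rw [E a b (s b (s a (s b c)))] at h3
      rw [E b a c] at h3
      exact h3.symm
    refine ⟨comm, ?_, ?_⟩
    · intro x y z
      rw [comm x y (s y z)]
      exact E y x z
    · intro x a b
      have h := h1 x a b
      rw [hLTD] at h
      exact h.symm
  · rintro ⟨C, Q, H⟩
    constructor
    · intro a b c
      rw [hLTD, H]
    · intro a b c
      rw [hLTD, hs, C a b (s a c)]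
      exact Q b a c
end

section
/- Let (S,·,∗) be an associative pentagon algebra. If there exists s ∈ S such that θ_s∘θ_s = id_S, then θ_x∘θ_x = id_S for every x ∈ S. -/
theorem stmt14 {S : Type*} (m s : S → S → S)
    (hm : ∀ a b c : S, m (m a b) c = m a (m b c))
    (hs : ∀ a b c : S, s (s a b) c = s a (s b c))
    (hI : ∀ a b c : S, m (s a b) (s (m a b) c) = s a (m b c))
    (hII : ∀ a b c : S, s (s a b) (s (m a b) c) = s b c)
    (hex : ∃ a : S, ∀ y : S, s a (s a y) = y) :
    ∀ x y : S, s x (s x y) = y := by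
  obtain ⟨t, ht⟩ := hex
  -- star: θ_a θ_b θ_{m a b} = θ_b pointwise
  have star : ∀ a b y : S, s a (s b (s (m a b) y)) = s b y := by
    intro a b y
    rw [← hs]
    exact hII a b y
  have tbij : Function.Bijective (s t) :=
    Function.bijective_iff_has_inverse.mpr ⟨s t, ht, ht⟩
  -- every θ_a surjective
  have surj : ∀ a : S, Function.Surjective (s a) := by
    intro a y
    refine ⟨s t (s (m a t) (s t y)), ?_⟩
    have h := star a t (s t y)
    rwa [ht] at h
  have bij : ∀ x : S, Function.Bijective (s x) := by
    intro x
    refine ⟨?_, surj x⟩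
    intro u v huv
    obtain ⟨w, hw⟩ := tbij.2 u
    obtain ⟨u', hu'⟩ := surj (m x t) w
    obtain ⟨w2, hw2⟩ := tbij.2 v
    obtain ⟨v', hv'⟩ := surj (m x t) w2
    have h1 := star x t u'
    have h2 := star x t v'
    rw [hu', hw] at h1
    rw [hv', hw2] at h2
    -- h1 : s x u = s t u', h2 : s x v = s t v'
    have : s t u' = s t v' := by rw [← h1, ← h2, huv]
    have huv' : u' = v' := tbij.1 this
    rw [← hw, ← hu', ← hw2, ← hv', huv']
  -- lift to permutations
  set E : S → Equiv.Perm S := fun a => Equiv.ofBijective (s a) (bij a) with hE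
  have Ecoe : ∀ a y : S, E a y = s a y := fun a y => rfl
  have crossedP : ∀ a b : S, E a * E b * E (m a b) = E b := by
    intro a b
    ext y
    simpa [Ecoe] using star a b y
  have Et2 : E t * E t = 1 := by
    ext y
    simpa [Ecoe] using ht y
  have crossed : ∀ a b : S, E (m a b) = (E b)⁻¹ * (E a)⁻¹ * E b := by
    intro a b
    have h := crossedP a b
    have : E (m a b) = (E a * E b)⁻¹ * (E a * E b * E (m a b)) := by group
    rw [h] at this
    rw [this]
    group
  have hmE : ∀ a b c : S, E (m (m a b) c) = E (m a (m b c)) := by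
    intro a b c
    rw [hm]
  have hti : (E t)⁻¹ = E t := by
    rw [inv_eq_iff_mul_eq_one]; exact Et2
  have key : ∀ a c : S, E c * (E a)⁻¹ * (E c)⁻¹ = E a := by
    intro a c
    have h := hmE a t c
    rw [crossed (m a t) c, crossed a t, crossed a (m t c), crossed t c] at h
    simp only [hti, mul_inv_rev, inv_inv, mul_assoc] at h
    have h1 := mul_left_cancel h
    have h2 := mul_left_cancel h1
    have h3 : E a * (E t * E c) = (E c * (E a)⁻¹ * (E c)⁻¹) * (E t * E c) := by
      simp only [mul_assoc]; exact h2
    exact (mul_right_cancel h3).symm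
  have Esq : ∀ x : S, E x * E x = 1 := by
    intro x
    have h := key x x
    have hinv : (E x)⁻¹ = E x := by
      have : E x * (E x)⁻¹ * (E x)⁻¹ = E x := h
      simpa using this
    nth_rewrite 1 [← hinv]
    exact inv_mul_cancel _
  intro x y
  have := congrArg (fun f : Equiv.Perm S => f y) (Esq x)
  simpa [Ecoe] using this
end

section
/- Let (S,·,∗) be an associative pentagon algebra such that θ_a is a bijection for some a ∈ S. Then (S,·,∗) is left-trivially distributive: (x·y)∗z = x∗z for all x,y,z ∈ S. -/
theorem stmt15 {S : Type*} (m s : S → S → S)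
    (hm : ∀ a b c : S, m (m a b) c = m a (m b c))
    (hs : ∀ a b c : S, s (s a b) c = s a (s b c))
    (hI : ∀ a b c : S, m (s a b) (s (m a b) c) = s a (m b c))
    (hII : ∀ a b c : S, s (s a b) (s (m a b) c) = s b c)
    (a : S) (ha : Function.Bijective (s a)) :
    ∀ x y z : S, s (m x y) z = s x z := by
  -- flattened form of (II)
  have star : ∀ x y z : S, s x (s y (s (m x y) z)) = s y z := by
    intro x y z; rw [← hs]; exact hII x y z
  -- every left translation is surjective
  have hsurj : ∀ x : S, Function.Surjective (s x) := by
    intro x t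
    obtain ⟨w, hw⟩ := ha.2 t
    exact ⟨s a (s (m x a) w), by rw [star, hw]⟩
  -- every left translation is injective
  have hinj : ∀ x : S, Function.Injective (s x) := by
    intro x u v huv
    obtain ⟨t₁, ht₁⟩ := ha.2 u
    obtain ⟨z₁, hz₁⟩ := hsurj (m x a) t₁
    obtain ⟨t₂, ht₂⟩ := ha.2 v
    obtain ⟨z₂, hz₂⟩ := hsurj (m x a) t₂
    have e₁ : s x u = s a z₁ := by
      have := star x a z₁; rwa [hz₁, ht₁] at this
    have e₂ : s x v = s a z₂ := by
      have := star x a z₂; rwa [hz₂, ht₂] at this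
    have : z₁ = z₂ := ha.1 (e₁.symm.trans (huv.trans e₂))
    rw [← ht₁, ← hz₁, this, hz₂, ht₂]
  have hbij : ∀ x : S, Function.Bijective (s x) := fun x => ⟨hinj x, hsurj x⟩
  -- pass to the permutation group
  set E : S → Equiv.Perm S := fun x => Equiv.ofBijective (s x) (hbij x) with hEdef
  have hE : ∀ x z : S, E x z = s x z := fun _ _ => rfl
  have rel2 : ∀ x y : S, E x * E y * E (m x y) = E y := by
    intro x y
    ext w
    simp only [Equiv.Perm.mul_apply, hE]
    exact star x y w
  have Em : ∀ x y : S, E (m x y) = (E y)⁻¹ * (E x)⁻¹ * E y := by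
    intro x y
    have h := rel2 x y
    have h2 : E (m x y) = (E y)⁻¹ * (E x)⁻¹ * (E x * E y * E (m x y)) := by group
    rw [h] at h2
    exact h2
  have rel3 : ∀ b y z : S,
      (E b * E y) * (E (m b y) * E z) * (E b * E (m y z)) = E (m b y) * E z := by
    intro b y z
    ext w
    simp only [Equiv.Perm.mul_apply, hE]
    have h := star (s b y) (s (m b y) z) w
    rw [hI] at h
    simp only [hs] at h
    exact h
  have key : ∀ b y z : S,
      E y * E z * E b * (E z)⁻¹ * (E y)⁻¹ = (E y)⁻¹ * (E b)⁻¹ * E y := by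
    intro b y z
    have h := rel3 b y z
    rw [Em b y, Em y z] at h
    have h' : (E y * E z * E b * (E z)⁻¹ * (E y)⁻¹) * E z
        = ((E y)⁻¹ * (E b)⁻¹ * E y) * E z := by
      rw [← h]; group
    exact mul_right_cancel h'
  -- all translations commute
  have comm : ∀ b z : S, Commute (E b) (E z) := by
    intro b z
    have h3 : E a * E z * E b * (E z)⁻¹ * (E a)⁻¹
        = E a * E b * E b * (E b)⁻¹ * (E a)⁻¹ := (key b a z).trans (key b a b).symm
    have h5 : E a * (E z * E b * (E z)⁻¹) = E a * E b := by
      calc E a * (E z * E b * (E z)⁻¹)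
          = (E a * E z * E b * (E z)⁻¹ * (E a)⁻¹) * E a := by group
        _ = (E a * E b * E b * (E b)⁻¹ * (E a)⁻¹) * E a := by rw [h3]
        _ = E a * E b := by group
    have h6 : E z * E b * (E z)⁻¹ = E b := mul_left_cancel h5
    have : E b * E z = E z * E b := by
      calc E b * E z = (E z * E b * (E z)⁻¹) * E z := by rw [h6]
        _ = E z * E b := by group
    exact this
  -- every translation is an involution
  have sq : ∀ b : S, E b * E b = 1 := by
    intro b
    have h := key b a a
    have hL : E a * E a * E b * (E a)⁻¹ * (E a)⁻¹ = E b := by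
      have c1 : E a * E b = E b * E a := (comm a b).eq
      calc E a * E a * E b * (E a)⁻¹ * (E a)⁻¹
          = E a * (E a * E b) * (E a)⁻¹ * (E a)⁻¹ := by group
        _ = E a * (E b * E a) * (E a)⁻¹ * (E a)⁻¹ := by rw [c1]
        _ = (E a * E b) * (E a)⁻¹ := by group
        _ = (E b * E a) * (E a)⁻¹ := by rw [c1]
        _ = E b := by group
    have hR : (E a)⁻¹ * (E b)⁻¹ * E a = (E b)⁻¹ := by
      have c2 : (E a)⁻¹ * (E b)⁻¹ = (E b)⁻¹ * (E a)⁻¹ := ((comm a b).inv_inv).eq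
      calc (E a)⁻¹ * (E b)⁻¹ * E a = (E b)⁻¹ * (E a)⁻¹ * E a := by rw [c2]
        _ = (E b)⁻¹ := by group
    have hbb : E b = (E b)⁻¹ := hL.symm.trans (h.trans hR)
    calc E b * E b = E b * (E b)⁻¹ := by rw [← hbb]
      _ = 1 := by group
  -- conclusion
  intro x y z
  have hfinal : E (m x y) = E x := by
    have c : (E x)⁻¹ * E y = E y * (E x)⁻¹ := ((comm x y).inv_left).eq
    have hx : (E x)⁻¹ = E x := by
      have := sq x
      calc (E x)⁻¹ = (E x)⁻¹ * (E x * E x) := by rw [this]; group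
        _ = E x := by group
    calc E (m x y) = (E y)⁻¹ * (E x)⁻¹ * E y := Em x y
      _ = (E y)⁻¹ * ((E x)⁻¹ * E y) := by group
      _ = (E y)⁻¹ * (E y * (E x)⁻¹) := by rw [c]
      _ = (E x)⁻¹ := by group
      _ = E x := hx
  have := congrArg (fun e : Equiv.Perm S => e z) hfinal
  simpa only [hE] using this
end

section
/- Let (S,·,∗) be an associative pentagon algebra such that (S,·) has a left annihilator L (L·x = L for all x). Then (S,·,∗) is left-trivially distributive: (x·y)∗z = x∗z for all x,y,z ∈ S. -/
theorem stmt17 {S : Type*} (m s : S → S → S) (L : S)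
    (hm : ∀ a b c : S, m (m a b) c = m a (m b c))
    (hs : ∀ a b c : S, s (s a b) c = s a (s b c))
    (hI : ∀ a b c : S, m (s a b) (s (m a b) c) = s a (m b c))
    (hII : ∀ a b c : S, s (s a b) (s (m a b) c) = s b c)
    (hL : ∀ x : S, m L x = L) :
    ∀ x y z : S, s (m x y) z = s x z := by
  intro x y z
  have h0 := hII L L x
  have h1 := hs (s x x) x (s (m x x) y)
  have h2 := hs L (s (s x L) x) (s L z)
  have h3 := hs x x (s L x)
  have h4 := hs (s x L) (m x L) (s L L)
  have h5 := hs (m x L) (s L L) (m y L)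
  have h6 := hs L (s (s x L) x) (s L y)
  have h7 := hII x L (s L z)
  have h8 := hII (s x x) (s (m x x) x) (s x (m x L))
  have h9 := hs (m x x) (s x L) (s L y)
  have h10 := hs (s (s x x) L) (s (s x x) L) (s (m x x) L)
  have h11 := hII L x (m x L)
  have h12 := hI L (s L y) (s L L)
  have h13 := hII x L z
  have h14 := hs (m x x) x y
  have h15 := hs L (s (s x L) x) (s L L)
  have h16 := hs (s (m x x) x) (s x (m x L)) z
  have h17 := hs (s x L) (m x L) (s L z)
  have h18 := hII (m x L) y L
  have h19 := hs L x L
  have h20 := hs (s x L) (m x L) L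
  have h21 := hs x (s L L) z
  have h22 := hs (s x x) x (m x x)
  have h23 := hs L (s x L) L
  have h24 := hs L L L
  have h25 := hs L (s x x) (s L L)
  have h26 := hII x x x
  have h27 := hs (s x x) L (s (s x x) L)
  have h28 := hs x (s L x) (s L y)
  have h29 := hs (s L x) (s x L) (s x (m x L))
  have h30 := hII (s x y) (s x L) (s L x)
  have h31 := hs x (s x x) (s (m x x) y)
  have h32 := hL (s (m x x) L)
  have h33 := hII L (m x y) z
  have h34 := hL L
  have h35 := hII L (m x L) y
  have h36 := hs (m x x) (s x L) (s L z)
  have h37 := hs (s x x) L (s (m x x) L)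
  have h38 := hII x x y
  have h39 := hL (s (s x x) y)
  have h40 := hs (s x x) (s (s x x) L) z
  have h41 := hs (s L L) (s (s x x) L) (s (s x x) z)
  have h42 := hII L (s (s x L) x) (s (m x x) L)
  have h43 := hII (s x y) (s (m x y) L) (s L x)
  have h44 := hs (m x y) (s L L) (s (s x x) L)
  have h45 := hm L x L
  have h46 := hs (s x L) (m x L) z
  have h47 := hs x (s L x) (s L z)
  have h48 := hs (m x x) x (s L x)
  have h49 := hs (s (s x x) x) (s (m x x) L) x
  have h50 := hs L x (s L x)
  have h51 := hs (s L x) L L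
  have h52 := hII L (m x L) (s (s x L) x)
  have h53 := hL (s (s x L) x)
  have h54 := hII L (m x L) (s (s x x) y)
  have h55 := hs (s L x) L (m y L)
  have h56 := hII (s x x) (s (m x x) L) (s x x)
  have h57 := hII L (s x (m x L)) L
  have h58 := hs L (s (m x x) L) (s x x)
  have h59 := hs L L (m y L)
  have h60 := hs (s (s x x) L) (s x L) x
  have h61 := hs x L L
  have h62 := hs (m x x) x z
  have h63 := hII (s x x) (s (m x x) x) (s L x)
  have h64 := hII L x x
  have h65 := hII (s L x) (s L x) L
  have h66 := hs (s (m x y) L) (s L L) (s L x)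
  have h67 := hs x L (s L x)
  have h68 := hs L (s x x) (s x x)
  have h69 := hs (s (m x x) x) (s x (m x L)) y
  have h70 := hII x L (s L y)
  have h71 := hs x (s x L) (s x (m x L))
  have h72 := hL y
  have h73 := hII L x (s L x)
  have h74 := hs L L z
  have h75 := hs (m x L) (s L L) y
  have h76 := hII L (m x y) (s (s x x) x)
  have h77 := hs (s (s x x) L) x (s L L)
  have h78 := hII x L L
  have h79 := hII (s L L) (s L x) x
  have h80 := hs (s (m x y) L) L (s (s x x) L)
  have h81 := hII (s L L) (s L x) L
  have h82 := hs (s x L) (s x (m x L)) (s x x)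
  have h83 := hL (s x (m x L))
  have h84 := hs (s (s x x) L) (s x (m x L)) L
  have h85 := hs L L x
  have h86 := hs (s (s x x) x) (m x x) (s L x)
  have h87 := hs (s x L) x (s L x)
  have h88 := hI L x x
  have h89 := hs (m x y) (s (s x x) L) (s L x)
  have h90 := hII x L (s L L)
  have h91 := hm x L y
  have h92 := hL (m x y)
  have h93 := hs (s (s x L) x) L (s x (m x L))
  have h94 := hs x L (s L z)
  have h95 := hII L (s (s x x) L) L
  have h96 := hs L (s x L) x
  have h97 := hII L (m x y) (s (s x x) z)
  have h98 := hs (s x x) (s (s x x) L) y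
  have h99 := hII L (m x L) (s (s x x) L)
  have h100 := hs x x (s x x)
  have h101 := hs (s x L) x (m x L)
  have h102 := hs (s (s x x) x) (s x x) (s (m x x) L)
  have h103 := hI (m x L) (s (s x x) y) (s (s x x) L)
  have h104 := hs x L (s L y)
  have h105 := hII L (s (s x L) x) (m x L)
  have h106 := hI x x L
  have h107 := hII x x L
  have h108 := hs (s (s x x) L) (s x (m x L)) z
  have h109 := hs (s x x) L (s L x)
  have h110 := hs L x (s L z)
  have h111 := hs (s L x) (s (s x x) x) L
  have h112 := hII L x (s L L)
  have h113 := hII L (s x (m x L)) z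
  have h114 := hs L (s x x) (s L x)
  have h115 := hL (s x x)
  have h116 := hs (s x x) x (s (m x x) L)
  have h117 := hII L (m x L) L
  have h118 := hs L (m x x) L
  have h119 := hII L L (m x L)
  have h120 := hs (s L x) L y
  have h121 := hm x L (s (s x x) y)
  have h122 := hs x (m x x) y
  have h123 := hII L x y
  have h124 := hs x (s x x) (s (m x x) z)
  have h125 := hs (m x y) L L
  have h126 := hs L L (s (s x x) L)
  have h127 := hII x x z
  have h128 := hs (m x x) L x
  have h129 := hI L y L
  have h130 := hII L x z
  have h131 := hs (s (s x L) x) L (s L L)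
  have h132 := hs L L y
  have h133 := hs x (s x x) (s (m x x) x)
  have h134 := hs (s x x) (s (m x x) L) (s (s x L) x)
  have h135 := hs (s (s x x) L) L (s L L)
  have h136 := hs (s (m x x) x) L (s L y)
  have h137 := hs (m x x) L (s x x)
  have h138 := hII (s x x) (s (m x x) x) y
  have h139 := hL x
  have h140 := hs (s x x) x (s x x)
  have h141 := hs (s (m x x) x) L (s L z)
  have h142 := hs (s (s x x) x) (s (m x x) x) (m x L)
  have h143 := hs (s x x) x L
  have h144 := hs L (s (s x L) x) (s (m x x) L)
  have h145 := hs x (s L x) (s L L)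
  have h146 := hs (s x x) (s x (m x x)) (s L x)
  have h147 := hs (s x x) L (s L L)
  have h148 := hII L (s x (m x L)) y
  have h149 := hI x x x
  have h150 := hs (s x x) (s (s x x) L) (s (m x x) L)
  have h151 := hs (s L L) L (m x L)
  have h152 := hII (s x x) (s (m x x) x) z
  have h153 := hs x (s L x) (s L x)
  have h154 := hs x x z
  have h155 := hs (s x x) L L
  have h156 := hs x (m x x) z
  have h157 := hs x (m x x) L
  have h158 := hs (s L x) (s L L) (m x L)
  have h159 := hs (m x L) (s (s x L) x) (s (s x x) L)
  have h160 := hs x L z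
  have h161 := hs (s (s x L) x) (s L L) y
  have h162 := hs (s x x) x (s x L)
  have h163 := hs (m x y) x (s x z)
  have h164 := hI L L x
  have h165 := hs L (s (s x x) L) (s (m x x) L)
  have h166 := hII L (s (s x x) L) z
  have h167 := hs L (s (s x L) x) (s L x)
  have h168 := hII L x (m y L)
  have h169 := hs x L x
  have h170 := hII L (s (s x L) x) L
  have h171 := hs (s x x) L (m x L)
  have h172 := hs (s x x) (s (s x L) x) L
  have h173 := hII L (s x x) L
  have h174 := hs (s x x) L (s x L)
  have h175 := hs (s (m x x) x) L (s L L)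
  have h176 := hs (s x x) L x
  have h177 := hs L (s x L) z
  have h178 := hII (s L L) (s L x) (m x L)
  have h179 := hL (s L y)
  have h180 := hs x (s x x) (s (m x x) L)
  have h181 := hs (s x L) (m x L) (s L y)
  have h182 := hL (s (s x x) L)
  have h183 := hs (s (s x L) x) L (s L x)
  have h184 := hs L x (m x L)
  have h185 := hs (s (s x L) x) L (s L y)
  have h186 := hs (s (s x L) x) (s L x) (m x L)
  have h187 := hs x (s (s x L) x) (s L L)
  have h188 := hs (s x x) (s L x) (s L x)
  have h189 := hs x (s (s x x) L) (m x L)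
  have h190 := hs x x y
  have h191 := hII (s x x) (s (m x x) x) L
  have h192 := hs x x (s x z)
  have h193 := hII x y L
  have h194 := hII L (s x x) (s (s x L) x)
  have h195 := hII L (m x y) x
  have h196 := hs (s (s x L) x) (s L L) x
  have h197 := hs (m x x) x (m x L)
  have h198 := hs x x x
  have h199 := hs (m x L) (s L L) L
  have h200 := hI x y L
  have h201 := hII L L y
  have h202 := hs x (s L L) y
  have h203 := hs (s (s x x) x) (m x x) (s x (m x L))
  have h204 := hII L (s (m x x) L) (s (s x L) x)
  have h205 := hs (m x x) x (s (s x x) L)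
  have h206 := hs (s x x) x (s (m x x) z)
  have h207 := hs x x (s x L)
  have h208 := hs L x x
  have h209 := hs (s (s x x) L) x (s L x)
  have h210 := hs (s x x) (s x (m x x)) (s x (m x L))
  have e0 : (m L x) = L := h139
  have e1 : (s (m L x) z) = (s L z) := (congrArg₂ s e0 (rfl : z = z))
  have e2 : (s (s x L) z) = (s x (s L z)) := h160
  have e3 : L = (m L L) := (Eq.symm h34)
  have e4 : (s L x) = (s (m L L) x) := (Eq.symm (Eq.symm (congrArg₂ s e3 (rfl : x = x))))
  have e5 : (s L x) = (s (s L L) (s L x)) := (Eq.trans (Eq.symm h0) (Eq.symm (congrArg₂ s (rfl : (s L L) = (s L L)) e4)))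
  have e6 : (m L x) = (m L (s L y)) := (Eq.trans h139 (Eq.symm h179))
  have e7 : (m (s L L) (s L x)) = (s L L) := (Eq.trans (Eq.trans (Eq.symm (congrArg₂ m (rfl : (s L L) = (s L L)) (Eq.symm e4))) h164) (congrArg₂ s (rfl : L = L) e0))
  have e8 : L = (m L (s L y)) := (Eq.symm h179)
  have e9 : (s (m L x) (s L L)) = (s (m (s L L) (s L x)) L) := (Eq.trans (Eq.trans (Eq.trans (congrArg₂ s e6 (rfl : (s L L) = (s L L))) (Eq.symm (congrArg₂ s e8 (rfl : (s L L) = (s L L))))) (Eq.symm h24)) (Eq.symm (congrArg₂ s e7 (rfl : L = L))))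
  have e10 : (s L (s x L)) = (s x (s L L)) := (Eq.trans (Eq.trans (Eq.trans (Eq.symm h19) (Eq.symm h81)) (Eq.symm (congrArg₂ s e5 e9))) (Eq.symm (Eq.symm h112)))
  have e11 : (s x z) = (s (s L x) (s L z)) := (Eq.trans (Eq.symm h130) (congrArg₂ s (rfl : (s L x) = (s L x)) e1))
  have e12 : (s (s x x) (s (m x x) z)) = (s (s L x) (s L z)) := (Eq.trans (Eq.trans h127 (Eq.symm h130)) (congrArg₂ s (rfl : (s L x) = (s L x)) e1))
  have e13 : (s (s x x) x) = (s x (s x x)) := h198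
  have e14 : (s x x) = (s (s x x) (s (m x x) x)) := (Eq.symm h26)
  have e15 : (s x (m x x)) = (m (s x x) (s (m x x) x)) := (Eq.symm h149)
  have e16 : (s x (s (m x x) z)) = (s (m (s x x) (s (m x x) x)) z) := (Eq.trans (Eq.symm h156) (congrArg₂ s e15 (rfl : z = z)))
  have e17 : (s L (s L z)) = (s (s L L) z) := (Eq.symm h74)
  have e18 : (s x z) = (s (s x L) (s L z)) := (Eq.trans (Eq.trans (Eq.trans (Eq.trans (Eq.trans (Eq.trans (Eq.trans (Eq.trans (Eq.symm h130) (congrArg₂ s (rfl : (s L x) = (s L x)) e1)) h110) (Eq.symm (congrArg₂ s (rfl : L = L) e2))) (Eq.symm h177)) (congrArg₂ s e10 (rfl : z = z))) h21) (Eq.symm (congrArg₂ s (rfl : x = x) e17))) (Eq.symm h94))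
  have e19 : (s (m (s L L) (s L x)) (m x L)) = (s (s L L) (m x L)) := (congrArg₂ s e7 (rfl : (m x L) = (m x L)))
  have e20 : (s (s L x) L) = (s L (s x L)) := (Eq.symm (Eq.symm h19))
  have e21 : (m L x) = (m L L) := (Eq.trans h139 (Eq.symm h34))
  have e22 : (s (m L x) x) = (s L x) := (Eq.trans (congrArg₂ s e21 (rfl : x = x)) (Eq.symm (congrArg₂ s e3 (rfl : x = x))))
  have e23 : (s x (s L x)) = (s (s x L) x) := (Eq.symm h169)
  have e24 : (s L (s (s x L) x)) = (s x x) := (Eq.trans (Eq.trans (Eq.trans (Eq.symm (congrArg₂ s (rfl : L = L) e23)) (Eq.symm h50)) (Eq.symm (congrArg₂ s (rfl : (s L x) = (s L x)) e22))) (Eq.symm (Eq.symm h64)))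
  have e25 : (m L (s (s x L) x)) = L := h53
  have e26 : (s (m L (s (s x L) x)) (s (m x x) L)) = (s L (s (m x x) L)) := (congrArg₂ s e25 (rfl : (s (m x x) L) = (s (m x x) L)))
  have e27 : (s (s L x) (s L x)) = (s x x) := (Eq.trans (Eq.symm (congrArg₂ s (rfl : (s L x) = (s L x)) e22)) (Eq.symm (Eq.symm h64)))
  have e28 : (s L (m x x)) = (m (s L x) (s L x)) := (Eq.trans (Eq.symm h88) (congrArg₂ m (rfl : (s L x) = (s L x)) e22))
  have e29 : (s (m (s L x) (s L x)) L) = (s L (s (m x x) L)) := (Eq.trans (Eq.symm (congrArg₂ s e28 (rfl : L = L))) (Eq.symm (Eq.symm h118)))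
  have e30 : (s (s (s x L) x) (s (m x x) L)) = (s (s x L) L) := (Eq.trans (Eq.trans (Eq.trans (Eq.trans (Eq.trans (Eq.trans (Eq.trans (Eq.symm h42) (congrArg₂ s e24 e26)) (Eq.symm (congrArg₂ s e27 e29))) (Eq.symm (Eq.symm h65))) (Eq.symm h81)) (Eq.symm (congrArg₂ s e5 e9))) (Eq.symm (Eq.symm h112))) (Eq.symm h61))
  have e31 : (s (s L x) (s L L)) = (s x L) := (Eq.trans (Eq.trans (Eq.trans (Eq.trans (Eq.trans (Eq.trans (Eq.symm h51) (congrArg₂ s e20 (rfl : L = L))) h23) (Eq.symm (congrArg₂ s (rfl : L = L) e30))) (Eq.symm h144)) (Eq.symm (Eq.symm (congrArg₂ s e24 (rfl : (s (m x x) L) = (s (m x x) L)))))) (Eq.symm (Eq.symm h107)))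
  have e32 : (s L (s x (m x L))) = (s (s x L) (m x L)) := (Eq.trans (Eq.trans (Eq.trans (Eq.trans (Eq.symm h184) (Eq.symm h178)) (congrArg₂ s (Eq.symm e5) e19)) (Eq.symm h158)) (congrArg₂ s e31 (rfl : (m x L) = (m x L))))
  have e33 : (m L (s x (m x L))) = L := h83
  have e34 : (s (m L (s x (m x L))) z) = (s L z) := (congrArg₂ s e33 (rfl : z = z))
  have e35 : (s (s x (m x x)) (s x (m x L))) = (s (m (s x x) (s (m x x) x)) (s x (m x L))) := (congrArg₂ s e15 (rfl : (s x (m x L)) = (s x (m x L))))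
  have e36 : (s (s x x) (s x (m x x))) = (s (s (s x x) x) (m x x)) := (Eq.symm h22)
  have e37 : (s (m x x) (s x (m x L))) = (s (s (m x x) x) (m x L)) := (Eq.symm h197)
  have e38 : (s (s L x) (s L x)) = (s (s x x) (s (m x x) x)) := (Eq.trans (Eq.trans (Eq.symm (congrArg₂ s (rfl : (s L x) = (s L x)) e22)) (Eq.symm (Eq.symm h64))) (Eq.symm h26))
  have e39 : (s (s (s x L) x) (s L x)) = (s (s (s x x) x) (s (m x x) x)) := (Eq.trans (Eq.trans (Eq.trans (Eq.trans (Eq.symm (congrArg₂ s e23 (rfl : (s L x) = (s L x)))) (Eq.symm (Eq.symm h153))) (Eq.symm (Eq.symm (congrArg₂ s (rfl : x = x) e38)))) (Eq.symm h133)) (Eq.symm (congrArg₂ s e13 (rfl : (s (m x x) x) = (s (m x x) x)))))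
  have e40 : (s (s L x) (m x L)) = (s L (s x (m x L))) := (Eq.symm (Eq.symm h184))
  have e41 : (s (s x x) (s (m x x) L)) = (s x L) := (Eq.symm (Eq.symm h107))
  have e42 : (s (s x x) (s (m x x) L)) = (s (s L x) (s L L)) := (Eq.trans (Eq.trans (Eq.trans (Eq.trans (Eq.trans (Eq.symm (congrArg₂ s e24 (rfl : (s (m x x) L) = (s (m x x) L)))) h144) (Eq.symm (Eq.symm (congrArg₂ s (rfl : L = L) e30)))) (Eq.symm h23)) (Eq.symm (congrArg₂ s e20 (rfl : L = L)))) (Eq.symm (Eq.symm h51)))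
  have e43 : (s x (s x L)) = (s (s (s x L) x) (s L L)) := (Eq.trans (Eq.trans (Eq.trans (Eq.symm (congrArg₂ s (rfl : x = x) e41)) (Eq.symm (Eq.symm (congrArg₂ s (rfl : x = x) e42)))) (Eq.symm h145)) (Eq.symm (Eq.symm (congrArg₂ s e23 (rfl : (s L L) = (s L L))))))
  have e44 : (s x (s (s x L) x)) = (s (s (s x x) L) x) := (Eq.trans (Eq.trans (congrArg₂ s (rfl : x = x) (Eq.symm e23)) (Eq.symm h3)) (Eq.symm h176))
  have e45 : (s x (s L L)) = (s (s (s x x) L) (s (m x x) L)) := (Eq.trans (Eq.trans (Eq.trans (Eq.trans (Eq.trans (Eq.symm h112) (congrArg₂ s e5 e9)) h81) (Eq.symm h65)) (congrArg₂ s e27 e29)) (Eq.symm h37))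
  have e46 : (s (s (s x x) L) (s (m x x) L)) = (s (s (s x L) x) (s (m x x) L)) := (Eq.trans (Eq.trans h37 (Eq.symm (congrArg₂ s e24 e26))) (Eq.symm (Eq.symm h42)))
  have e47 : (s (m (s L L) (s L x)) x) = (s (m L x) (s L x)) := (Eq.trans (Eq.trans (Eq.symm (congrArg₂ s (Eq.symm e7) (rfl : x = x))) h85) (Eq.symm (congrArg₂ s e0 (rfl : (s L x) = (s L x)))))
  have e48 : (s L (s x x)) = (s (s x L) x) := (Eq.trans (Eq.trans (Eq.trans (Eq.trans (Eq.symm h208) (Eq.symm h79)) (congrArg₂ s (Eq.symm e5) e47)) h73) (Eq.symm h169))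
  have e49 : (m L (s x x)) = L := h115
  have e50 : (s (m L (s x x)) L) = (s L L) := (congrArg₂ s e49 (rfl : L = L))
  have e51 : (s (s x x) L) = (s (s (s x L) x) (s L L)) := (Eq.trans (Eq.symm h173) (congrArg₂ s e48 e50))
  have e52 : (s (m L (s (s x L) x)) L) = (s L L) := (congrArg₂ s e25 (rfl : L = L))
  have e53 : (s (s (s x L) x) L) = (s L (s (s x x) L)) := (Eq.trans (Eq.trans (Eq.trans (Eq.symm h170) (congrArg₂ s (rfl : (s L (s (s x L) x)) = (s L (s (s x L) x))) e52)) (Eq.symm (Eq.symm h15))) (Eq.symm (congrArg₂ s (rfl : L = L) e51)))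
  have e54 : (s (m L (s x x)) (s (s x L) x)) = (s x x) := (Eq.trans (Eq.trans (Eq.trans (Eq.trans (congrArg₂ s e49 (rfl : (s (s x L) x) = (s (s x L) x))) (Eq.symm (congrArg₂ s (rfl : L = L) e23))) (Eq.symm h50)) (Eq.symm (congrArg₂ s (rfl : (s L x) = (s L x)) e22))) (Eq.symm (Eq.symm h64)))
  have e55 : (s L (s x L)) = (s (s (s x x) L) (s (m x x) L)) := (Eq.trans (Eq.trans (Eq.trans (Eq.symm h19) (Eq.symm h65)) (congrArg₂ s e27 e29)) (Eq.symm h37))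
  have e56 : (s x (s x L)) = (s (s x x) L) := (Eq.trans (Eq.trans (Eq.trans (Eq.trans (Eq.trans (Eq.symm (congrArg₂ s (rfl : x = x) e41)) (Eq.symm (Eq.symm (congrArg₂ s (rfl : x = x) e42)))) (Eq.symm h145)) (Eq.symm (Eq.symm (congrArg₂ s e23 (rfl : (s L L) = (s L L)))))) (Eq.symm (congrArg₂ s e48 e50))) (Eq.symm (Eq.symm h173)))
  have e57 : (m L (s (m x x) L)) = L := h32
  have e58 : (s (m L (s (m x x) L)) (s (s x L) x)) = (s x x) := (Eq.trans (Eq.trans (Eq.trans (Eq.trans (congrArg₂ s e57 (rfl : (s (s x L) x) = (s (s x L) x))) (Eq.symm (congrArg₂ s (rfl : L = L) e23))) (Eq.symm h50)) (Eq.symm (congrArg₂ s (rfl : (s L x) = (s L x)) e22))) (Eq.symm (Eq.symm h64)))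
  have e59 : (s (s x x) L) = (s (s (s x x) x) (s (m x x) L)) := (Eq.trans (Eq.trans (Eq.trans (Eq.trans (Eq.trans (Eq.trans (Eq.symm h173) (congrArg₂ s e48 e50)) (Eq.symm (congrArg₂ s e23 (rfl : (s L L) = (s L L))))) h145) (Eq.symm (congrArg₂ s (rfl : x = x) e42))) (Eq.symm h180)) (congrArg₂ s (Eq.symm e13) (rfl : (s (m x x) L) = (s (m x x) L))))
  have e60 : (s (m x x) (s L x)) = (s (s (m x x) L) x) := (Eq.symm h128)
  have e61 : (s (s x (m x x)) (s L x)) = (s (m (s x x) (s (m x x) x)) (s L x)) := (congrArg₂ s e15 (rfl : (s L x) = (s L x)))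
  have e62 : (s L (s x x)) = (s x (s L x)) := (Eq.trans (Eq.trans (Eq.trans (Eq.symm h208) (Eq.symm h79)) (congrArg₂ s (Eq.symm e5) e47)) h73)
  have e63 : (s (s x x) (s L x)) = (s (s (m x x) L) (s x x)) := (Eq.trans (Eq.trans (Eq.trans (Eq.trans (Eq.trans (Eq.trans (Eq.trans (Eq.trans (Eq.trans (Eq.trans (Eq.trans (Eq.symm h176) (congrArg₂ s e59 (rfl : x = x))) h49) (Eq.symm (congrArg₂ s (rfl : (s (s x x) x) = (s (s x x) x)) e60))) (Eq.symm h86)) (Eq.symm (congrArg₂ s e36 (rfl : (s L x) = (s L x))))) h146) (congrArg₂ s e14 e61)) h63) h48) (Eq.symm (congrArg₂ s (rfl : (m x x) = (m x x)) e62))) (Eq.symm h137))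
  have e64 : (s x (s x x)) = (s (s (m x x) L) (s (s x L) x)) := (Eq.trans (Eq.trans (Eq.trans (Eq.trans (Eq.trans (Eq.trans (Eq.trans (Eq.trans (Eq.trans (Eq.symm (congrArg₂ s (rfl : x = x) (Eq.symm e14))) (Eq.symm (congrArg₂ s (rfl : x = x) e38))) (Eq.symm h153)) (congrArg₂ s e23 (rfl : (s L x) = (s L x)))) (Eq.symm (congrArg₂ s e48 (rfl : (s L x) = (s L x))))) (Eq.symm (Eq.symm h114))) (Eq.symm (Eq.symm (congrArg₂ s (rfl : L = L) e63)))) (Eq.symm h58)) (Eq.symm (congrArg₂ s (rfl : (s L (s (m x x) L)) = (s L (s (m x x) L))) e58))) (Eq.symm (Eq.symm h204)))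
  have e65 : (s (s (s x x) x) (s x x)) = (s (s x x) x) := (Eq.trans (Eq.trans (Eq.trans (Eq.trans (Eq.trans (Eq.trans (Eq.trans (Eq.trans (Eq.trans h140 (congrArg₂ s (rfl : (s x x) = (s x x)) e64)) (Eq.symm h134)) (Eq.symm (Eq.symm (congrArg₂ s e41 (Eq.symm e23))))) (Eq.symm h87)) (Eq.symm (congrArg₂ s e23 (rfl : (s L x) = (s L x))))) (Eq.symm (Eq.symm h153))) (Eq.symm (Eq.symm (congrArg₂ s (rfl : x = x) e38)))) (Eq.symm (Eq.symm (congrArg₂ s (rfl : x = x) (Eq.symm e14))))) (Eq.symm h198))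
  have e66 : (s (s x x) (s (s x x) L)) = (s (s x x) L) := (Eq.trans (Eq.trans (Eq.trans (Eq.trans (Eq.trans (Eq.trans (Eq.trans (Eq.trans (Eq.trans (Eq.trans (Eq.trans (Eq.symm (congrArg₂ s (rfl : (s x x) = (s x x)) e56)) (Eq.symm h162)) (Eq.symm (Eq.symm (congrArg₂ s (rfl : (s (s x x) x) = (s (s x x) x)) (Eq.symm e41))))) (Eq.symm h102)) (Eq.symm (Eq.symm (congrArg₂ s e65 (rfl : (s (m x x) L) = (s (m x x) L)))))) (Eq.symm (congrArg₂ s (Eq.symm e13) (rfl : (s (m x x) L) = (s (m x x) L))))) (Eq.symm (Eq.symm h180))) (Eq.symm (Eq.symm (congrArg₂ s (rfl : x = x) e42)))) (Eq.symm h145)) (Eq.symm (Eq.symm (congrArg₂ s e23 (rfl : (s L L) = (s L L)))))) (Eq.symm (congrArg₂ s e48 e50))) (Eq.symm (Eq.symm h173)))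
  have e67 : (s L (s x L)) = (s (s (s x x) L) (s x L)) := (Eq.trans (Eq.trans (Eq.trans (Eq.trans (Eq.trans (Eq.trans (Eq.trans (Eq.symm h19) (Eq.symm h65)) (congrArg₂ s e27 e29)) (Eq.symm h37)) (Eq.symm (congrArg₂ s e66 (rfl : (s (m x x) L) = (s (m x x) L))))) (Eq.symm (Eq.symm h150))) (Eq.symm (congrArg₂ s (rfl : (s x x) = (s x x)) e55))) (Eq.symm h174))
  have e68 : (s (s (s x x) L) x) = (s (s x x) (s L x)) := (Eq.symm (Eq.symm h176))
  have e69 : (s (s x x) (s x x)) = (s x x) := (Eq.trans (Eq.trans (Eq.trans (Eq.trans (Eq.trans (Eq.trans (Eq.trans (Eq.trans (Eq.trans (Eq.trans (Eq.trans (Eq.symm (congrArg₂ s (rfl : (s x x) = (s x x)) e27)) (Eq.symm h188)) (Eq.symm (congrArg₂ s e68 (rfl : (s L x) = (s L x))))) (Eq.symm (Eq.symm h209))) (Eq.symm (Eq.symm (congrArg₂ s (rfl : (s (s x x) L) = (s (s x x) L)) e23)))) (Eq.symm h60)) (Eq.symm (congrArg₂ s e67 (rfl : x = x)))) (Eq.symm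 (Eq.symm h96))) (Eq.symm (congrArg₂ s (rfl : L = L) e23))) (Eq.symm h50)) (Eq.symm (congrArg₂ s (rfl : (s L x) = (s L x)) e22))) (Eq.symm (Eq.symm h64)))
  have e70 : (s (s x x) (s (s x L) x)) = (s (s x L) x) := (Eq.trans (Eq.trans (Eq.trans (Eq.trans (Eq.trans (Eq.trans (Eq.trans (Eq.trans (Eq.symm h194) (congrArg₂ s (rfl : (s L (s x x)) = (s L (s x x))) e54)) h68) (congrArg₂ s (rfl : L = L) e69)) (Eq.symm h208)) (Eq.symm h79)) (congrArg₂ s (Eq.symm e5) e47)) h73) (Eq.symm h169))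
  have e71 : (s L (s (s x x) L)) = (s (s (s x x) L) (s (s x x) L)) := (Eq.trans (Eq.trans (Eq.trans (Eq.trans (Eq.trans (Eq.trans (Eq.trans (congrArg₂ s (rfl : L = L) e51) (Eq.symm h15)) (Eq.symm (congrArg₂ s (rfl : (s L (s (s x L) x)) = (s L (s (s x L) x))) e52))) (Eq.symm (Eq.symm h170))) (Eq.symm (congrArg₂ s e70 (rfl : L = L)))) (Eq.symm (Eq.symm h172))) (Eq.symm (Eq.symm (congrArg₂ s (rfl : (s x x) = (s x x)) e53)))) (Eq.symm h27))
  have e72 : (s (s (s x x) x) L) = (s x L) := (Eq.trans (Eq.trans (Eq.trans (Eq.trans (Eq.trans (Eq.trans (Eq.trans (Eq.trans (Eq.trans (Eq.trans (Eq.trans (Eq.trans (Eq.trans h143 h207) (congrArg₂ s (rfl : x = x) e43)) (Eq.symm h187)) (congrArg₂ s e44 (rfl : (s L L) = (s L L)))) h77) (congrArg₂ s (rfl : (s (s x x) L) = (s (s x x) L)) e45)) (Eq.symm h10)) (Eq.symm (congrArg₂ s e71 (rfl : (s (m x x) L) = (s (m x x) L))))) (Eq.symm (Eq.symm h165))) (Eq.symm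 (Eq.symm (congrArg₂ s (rfl : L = L) e46)))) (Eq.symm h144)) (Eq.symm (Eq.symm (congrArg₂ s e24 (rfl : (s (m x x) L) = (s (m x x) L)))))) (Eq.symm (Eq.symm h107)))
  have e73 : (m L (s (s x x) L)) = L := h182
  have e74 : (s L L) = (s (m L (s (s x x) L)) L) := (Eq.symm (congrArg₂ s e73 (rfl : L = L)))
  have e75 : (s (s (s x x) L) L) = (s (s (s x L) x) L) := (Eq.trans (Eq.trans (Eq.trans (Eq.symm (Eq.symm h155)) (Eq.symm (Eq.symm (congrArg₂ s (Eq.symm e24) (rfl : (s L L) = (s L L)))))) (Eq.symm (congrArg₂ s (rfl : (s L (s (s x L) x)) = (s L (s (s x L) x))) e52))) (Eq.symm (Eq.symm h170)))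
  have e76 : (s (m L (s x (m x L))) L) = (s L L) := (congrArg₂ s e33 (rfl : L = L))
  have e77 : (s L (s L L)) = (s (s x (m x L)) L) := (Eq.trans (Eq.trans (Eq.trans (Eq.symm h90) (Eq.symm h4)) (Eq.symm (congrArg₂ s e32 e76))) (Eq.symm (Eq.symm h57)))
  have e78 : (m L (s (s x L) x)) = (m L x) := (Eq.trans h53 (Eq.symm h139))
  have e79 : (s L (m x L)) = (s (m L (s (s x L) x)) (m x L)) := (Eq.trans (congrArg₂ s (Eq.symm e0) (rfl : (m x L) = (m x L))) (Eq.symm (congrArg₂ s e78 (rfl : (m x L) = (m x L)))))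
  have e80 : (s (s (s x x) L) (m x L)) = (s (s x L) (s x (m x L))) := (Eq.trans (Eq.trans (Eq.trans (Eq.symm (Eq.symm h171)) (Eq.symm (Eq.symm (congrArg₂ s (Eq.symm e24) e79)))) (Eq.symm (Eq.symm h105))) (Eq.symm (Eq.symm h101)))
  have e81 : (s x (s (s x x) L)) = (s x L) := (Eq.trans (Eq.trans (Eq.trans (Eq.trans (Eq.trans (Eq.trans (Eq.trans (Eq.trans (Eq.trans (Eq.trans (Eq.trans (congrArg₂ s (rfl : x = x) e51) (Eq.symm h187)) (congrArg₂ s e44 (rfl : (s L L) = (s L L)))) h77) (congrArg₂ s (rfl : (s (s x x) L) = (s (s x x) L)) e45)) (Eq.symm h10)) (Eq.symm (congrArg₂ s e71 (rfl : (s (m x x) L) = (s (m x x) L))))) (Eq.symm (Eq.symm h165))) (Eq.symm (Eq.symm (congrArg₂ s (rfl : L = L) e46)))) (Eq.symm h144)) (Eq.symm (Eq.symm (congrArg₂ s e24 (rfl : (s (m x x) L) = (s (m x x) L)))))) (Eq.symm (Eq.symm h107)))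
  have e82 : (s (s (s x x) L) (s x (m x L))) = (s (s x L) (m x L)) := (Eq.trans (Eq.trans (Eq.trans (Eq.trans (congrArg₂ s (Eq.symm e56) (rfl : (s x (m x L)) = (s x (m x L)))) h71) (Eq.symm (congrArg₂ s (rfl : x = x) e80))) (Eq.symm h189)) (congrArg₂ s e81 (rfl : (m x L) = (m x L))))
  have e83 : (s (s (s x L) x) L) = (s L L) := (Eq.trans (Eq.trans (Eq.trans (Eq.trans (Eq.trans (Eq.trans (Eq.trans (Eq.trans (Eq.trans (Eq.trans (Eq.trans (Eq.trans (Eq.symm h170) (congrArg₂ s (rfl : (s L (s (s x L) x)) = (s L (s (s x L) x))) e52)) (Eq.symm (congrArg₂ s (Eq.symm e24) (rfl : (s L L) = (s L L))))) (Eq.symm h155)) (Eq.symm h95)) (Eq.symm (congrArg₂ s e53 e74))) (Eq.symm (congrArg₂ s e75 (rfl : (s L L) = (s L L))))) h135) (congrArg₂ s (rfl : (s (s x x) L) = (s (s x x) L)) e77)) (Eq.symm h84)) (congrArg₂ s e82 (rfl : L = L))) h20) h78)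
  have e84 : (s (s L L) x) = (s L (s L x)) := h85
  have e85 : (s (s (s x L) x) (s L L)) = (s (s (s x x) x) (s (m x x) L)) := (Eq.trans (Eq.trans (Eq.trans (Eq.trans (Eq.symm (congrArg₂ s e23 (rfl : (s L L) = (s L L)))) h145) (Eq.symm (congrArg₂ s (rfl : x = x) e42))) (Eq.symm h180)) (congrArg₂ s (Eq.symm e13) (rfl : (s (m x x) L) = (s (m x x) L))))
  have e86 : (s L x) = (s (s (m x x) L) (s x x)) := (Eq.trans (Eq.trans (Eq.trans (Eq.trans (Eq.trans (Eq.trans (Eq.trans (Eq.trans (Eq.trans (Eq.trans (Eq.trans (Eq.trans (Eq.trans (Eq.trans (Eq.trans (Eq.symm h0) (Eq.symm (congrArg₂ s e83 e4))) h183) (Eq.symm (congrArg₂ s (rfl : (s (s x L) x) = (s (s x L) x)) e84))) (Eq.symm h196)) (congrArg₂ s e85 (rfl : x = x))) h49) (Eq.symm (congrArg₂ s (rfl : (s (s x x) x) = (s (s x x) x)) e60))) (Eq.symm h86)) (Eq.symm (congrArg₂ s e36 (rfl : (s L x) = (s L x))))) h146) (congrArg₂ s e14 e61)) h63) h48) (Eq.symm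 (congrArg₂ s (rfl : (m x x) = (m x x)) e62))) (Eq.symm h137))
  have e87 : (s (s x x) x) = (s (m L x) (s L x)) := (Eq.trans (Eq.trans (Eq.trans (Eq.trans (Eq.trans (Eq.trans (Eq.trans (Eq.trans (Eq.trans h198 (Eq.symm (congrArg₂ s (rfl : x = x) (Eq.symm e14)))) (Eq.symm (congrArg₂ s (rfl : x = x) e38))) (Eq.symm h153)) (congrArg₂ s e23 (rfl : (s L x) = (s L x)))) (Eq.symm (congrArg₂ s e48 (rfl : (s L x) = (s L x))))) (Eq.symm (Eq.symm h114))) (Eq.symm (Eq.symm (congrArg₂ s (rfl : L = L) e63)))) (Eq.symm (congrArg₂ s (rfl : L = L) e86))) (Eq.symm (congrArg₂ s e0 (rfl : (s L x) = (s L x)))))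
  have e88 : (s (s L x) (s (s x x) x)) = (s (s x L) x) := (Eq.trans (Eq.trans (congrArg₂ s (rfl : (s L x) = (s L x)) e87) h73) (Eq.symm h169))
  have e89 : (s (s (s x L) x) L) = (s (s L x) (s x L)) := (Eq.trans (Eq.trans (Eq.symm (congrArg₂ s e88 (rfl : L = L))) (Eq.symm (Eq.symm h111))) (Eq.symm (Eq.symm (congrArg₂ s (rfl : (s L x) = (s L x)) e72))))
  have e90 : (s L (s (s x x) L)) = (s L L) := (Eq.trans (Eq.trans (Eq.trans (Eq.trans (Eq.trans (Eq.trans (Eq.trans (Eq.trans (Eq.trans (Eq.trans (Eq.trans (Eq.trans (congrArg₂ s (rfl : L = L) e51) (Eq.symm h15)) (Eq.symm (congrArg₂ s (Eq.symm e24) (rfl : (s L L) = (s L L))))) (Eq.symm h155)) (Eq.symm h95)) (Eq.symm (congrArg₂ s e53 e74))) (Eq.symm (congrArg₂ s e75 (rfl : (s L L) = (s L L))))) h135) (congrArg₂ s (rfl : (s (s x x) L) = (s (s x x) L)) e77)) (Eq.symm h84)) (congrArg₂ s e82 (rfl : L = L))) h20) h78)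
  have e91 : (s L (s (s x x) L)) = (s (s x x) (s L L)) := (Eq.trans (Eq.trans (congrArg₂ s (rfl : L = L) e51) (Eq.symm h15)) (Eq.symm (congrArg₂ s (Eq.symm e24) (rfl : (s L L) = (s L L)))))
  have e92 : (s (s x x) L) = (s (s L L) L) := (Eq.trans (Eq.trans (Eq.trans (Eq.trans (Eq.trans (Eq.trans (Eq.symm h173) (Eq.symm (Eq.symm (congrArg₂ s (rfl : (s L (s x x)) = (s L (s x x))) e50)))) (Eq.symm (Eq.symm h25))) (Eq.symm (congrArg₂ s (rfl : L = L) e91))) (Eq.symm (Eq.symm (congrArg₂ s e8 e90)))) (Eq.symm (congrArg₂ s e8 (rfl : (s L L) = (s L L))))) (Eq.symm h24))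
  have e93 : (s L (m x L)) = (s (m L L) (m x L)) := (Eq.trans (congrArg₂ s (Eq.symm e0) (rfl : (m x L) = (m x L))) (Eq.symm (congrArg₂ s (Eq.symm e21) (rfl : (m x L) = (m x L)))))
  have e94 : (s (s x L) (s x (m x L))) = (s (m L x) (m x L)) := (Eq.trans (Eq.trans (Eq.trans (Eq.trans (Eq.trans (Eq.trans (Eq.trans (Eq.trans (Eq.symm h101) (Eq.symm h105)) (Eq.symm (congrArg₂ s (Eq.symm e24) e79))) (Eq.symm h171)) (congrArg₂ s e92 (rfl : (m x L) = (m x L)))) h151) (congrArg₂ s (rfl : (s L L) = (s L L)) e93)) h119) (congrArg₂ s (Eq.symm e0) (rfl : (m x L) = (m x L))))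
  have e95 : (s x (m x L)) = (s (s (m x x) x) (s x (m x L))) := (Eq.trans (Eq.trans (Eq.trans (Eq.trans (Eq.trans (Eq.trans (Eq.trans (Eq.trans (Eq.trans (Eq.trans (Eq.trans (Eq.trans (Eq.trans (Eq.trans (Eq.symm h11) (Eq.symm (congrArg₂ s (rfl : (s L x) = (s L x)) e94))) (Eq.symm h29)) (Eq.symm (congrArg₂ s e89 (rfl : (s x (m x L)) = (s x (m x L)))))) (Eq.symm (Eq.symm h93))) (Eq.symm (congrArg₂ s (rfl : (s (s x L) x) = (s (s x L) x)) e40))) (Eq.symm h186)) (Eq.symm (Eq.symm (congrArg₂ s e39 (rfl : (m x L) = (m x L)))))) (Eq.symm (Eq.symm h142))) (Eq.symm (congrArg₂ s (rfl : (s (s x x) x) = (s (s x x) x)) e37))) (Eq.symm h203)) (Eq.symm (congrArg₂ s e36 (rfl : (s x (m x L)) = (s x (m x L)))))) (Eq.symm (Eq.symm h210))) (Eq.symm (Eq.symm (congrArg₂ s e14 e35)))) (Eq.symm (Eq.symm h8)))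
  have e96 : (s L (s L z)) = (s (s x (m x L)) z) := (Eq.trans (Eq.trans (Eq.trans (Eq.symm h7) (Eq.symm h17)) (Eq.symm (congrArg₂ s e32 e34))) h113)
  have e97 : (s (m (s x x) (s (m x x) x)) L) = (s x (s (m x x) L)) := (Eq.trans (congrArg₂ s (Eq.symm e15) (rfl : L = L)) h157)
  have e98 : (s x (s x L)) = (s L (s L L)) := (Eq.trans (Eq.trans (Eq.trans (Eq.trans (Eq.trans (Eq.trans (Eq.trans (Eq.trans (Eq.trans (Eq.symm (congrArg₂ s (rfl : x = x) e41)) (Eq.symm (Eq.symm (congrArg₂ s (rfl : x = x) e42)))) (Eq.symm h145)) (Eq.symm (Eq.symm (congrArg₂ s e23 (rfl : (s L L) = (s L L)))))) (Eq.symm (congrArg₂ s e48 e50))) (Eq.symm (Eq.symm (congrArg₂ s (rfl : (s L (s x x)) = (s L (s x x))) e50)))) (Eq.symm (Eq.symm h25))) (Eq.symm (congrArg₂ s (rfl : L = L) e91))) (Eq.symm (Eq.symm (congrArg₂ s e8 e90)))) (Eq.symm (congrArg₂ s e8 (rfl : (s L L) = (s L L)))))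
  have e99 : (s (s x x) L) = (s L (s L L)) := (Eq.trans (Eq.trans (Eq.trans (Eq.trans (Eq.trans (Eq.symm h173) (Eq.symm (Eq.symm (congrArg₂ s (rfl : (s L (s x x)) = (s L (s x x))) e50)))) (Eq.symm (Eq.symm h25))) (Eq.symm (congrArg₂ s (rfl : L = L) e91))) (Eq.symm (Eq.symm (congrArg₂ s e8 e90)))) (Eq.symm (congrArg₂ s e8 (rfl : (s L L) = (s L L)))))
  have e100 : (s (s (m x x) x) L) = (s (s x x) L) := (Eq.trans (Eq.trans (Eq.trans (Eq.trans (Eq.trans (Eq.trans (Eq.trans (Eq.trans (Eq.trans (Eq.symm h191) (congrArg₂ s (Eq.symm e14) e97)) (Eq.symm h116)) (Eq.symm (congrArg₂ s (Eq.symm e13) (rfl : (s (m x x) L) = (s (m x x) L))))) (Eq.symm (Eq.symm h180))) (Eq.symm (Eq.symm (congrArg₂ s (rfl : x = x) e42)))) (Eq.symm h145)) (Eq.symm (Eq.symm (congrArg₂ s e23 (rfl : (s L L) = (s L L)))))) (Eq.symm (congrArg₂ s e48 e50))) (Eq.symm (Eq.symm h173)))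
  have e101 : (s (s (m x x) x) L) = (s (m x x) (s x L)) := (Eq.trans (Eq.trans (Eq.trans (Eq.trans (Eq.trans (Eq.trans (Eq.trans (Eq.trans (Eq.trans (Eq.trans (Eq.trans (Eq.trans (Eq.trans (Eq.symm h191) (congrArg₂ s (Eq.symm e14) e97)) (Eq.symm h116)) (Eq.symm (congrArg₂ s e65 (rfl : (s (m x x) L) = (s (m x x) L))))) h102) (Eq.symm (congrArg₂ s (rfl : (s (s x x) x) = (s (s x x) x)) (Eq.symm e41)))) h162) (congrArg₂ s (rfl : (s x x) = (s x x)) e98)) (Eq.symm h147)) (Eq.symm (congrArg₂ s e100 (rfl : (s L L) = (s L L))))) (Eq.symm (Eq.symm h175))) (Eq.symm (congrArg₂ s (rfl : (s (m x x) x) = (s (m x x) x)) e99))) (Eq.symm (Eq.symm h205))) (Eq.symm (Eq.symm (congrArg₂ s (rfl : (m x x) = (m x x)) e81))))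
  have e102 : (s x (s x z)) = (s (s L L) z) := (Eq.trans (Eq.trans (Eq.trans (Eq.trans (Eq.trans (Eq.trans (Eq.trans (Eq.trans (Eq.trans (Eq.trans (Eq.trans (Eq.trans (Eq.trans (Eq.trans (Eq.trans (Eq.trans (Eq.trans (Eq.trans (Eq.trans (congrArg₂ s (rfl : x = x) e11) (Eq.symm (congrArg₂ s (rfl : x = x) e12))) (Eq.symm h124)) (Eq.symm (congrArg₂ s e13 (rfl : (s (m x x) z) = (s (m x x) z))))) h206) (congrArg₂ s e14 e16)) h152) h62) (congrArg₂ s (rfl : (m x x) = (m x x)) e18)) (Eq.symm h36)) (Eq.symm (congrArg₂ s e101 (rfl : (s L z) = (s L z))))) (Eq.symm (Eq.symm h141))) (Eq.symm (Eq.symm (congrArg₂ s (rfl : (s (m x x) x) = (s (m x x) x)) e96)))) (Eq.symm h16)) (Eq.symm (congrArg₂ s e95 (rfl : z = z)))) (Eq.symm h113)) (Eq.symm (Eq.symm (congrArg₂ s e32 e34)))) (Eq.symm (Eq.symm h17))) (Eq.symm (Eq.symm h7))) (Eq.symm h74))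
  have e103 : (s x (s x x)) = (s L (s L x)) := (Eq.trans (Eq.trans (Eq.trans (Eq.trans (Eq.trans (Eq.trans (Eq.trans (Eq.symm (congrArg₂ s (rfl : x = x) (Eq.symm e14))) (Eq.symm (congrArg₂ s (rfl : x = x) e38))) (Eq.symm h153)) (congrArg₂ s e23 (rfl : (s L x) = (s L x)))) (Eq.symm (congrArg₂ s e48 (rfl : (s L x) = (s L x))))) (Eq.symm (Eq.symm h114))) (Eq.symm (Eq.symm (congrArg₂ s (rfl : L = L) e63)))) (Eq.symm (congrArg₂ s (rfl : L = L) e86)))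
  have e104 : (m L (m x y)) = (m L L) := (Eq.trans h92 (Eq.symm h34))
  have e105 : L = (m L (m x y)) := (Eq.symm h92)
  have e106 : (s (s (s x L) x) (s L x)) = (s (s x x) x) := (Eq.trans (Eq.trans (Eq.trans (Eq.trans (Eq.symm (congrArg₂ s e23 (rfl : (s L x) = (s L x)))) (Eq.symm (Eq.symm h153))) (Eq.symm (Eq.symm (congrArg₂ s (rfl : x = x) e38)))) (Eq.symm (Eq.symm (congrArg₂ s (rfl : x = x) (Eq.symm e14))))) (Eq.symm h198))
  have e107 : (s (m L (m x y)) x) = (s (m L (m x y)) (s (s x x) x)) := (Eq.trans (Eq.trans (Eq.trans (Eq.trans (Eq.trans (Eq.trans (Eq.trans (Eq.trans (Eq.trans (Eq.trans (Eq.trans (Eq.trans (congrArg₂ s e104 (rfl : x = x)) (Eq.symm (congrArg₂ s e3 (rfl : x = x)))) (Eq.symm h0)) (Eq.symm (congrArg₂ s e83 e4))) h183) (Eq.symm (congrArg₂ s (rfl : (s (s x L) x) = (s (s x L) x)) e84))) (Eq.symm h196)) (congrArg₂ s e85 (rfl : x = x))) (Eq.symm (congrArg₂ s e59 (rfl : x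 = x)))) (Eq.symm (Eq.symm h176))) (Eq.symm (congrArg₂ s e24 (rfl : (s L x) = (s L x))))) (Eq.symm (Eq.symm h167))) (Eq.symm (Eq.symm (congrArg₂ s e105 e106))))
  have e108 : (s (s (m x x) L) (s (s x L) x)) = (s L (s L x)) := (Eq.trans (Eq.trans (Eq.trans (Eq.symm h204) (congrArg₂ s (rfl : (s L (s (m x x) L)) = (s L (s (m x x) L))) e58)) h58) (Eq.symm (congrArg₂ s (rfl : L = L) e86)))
  have e109 : (s (s (s x x) L) (s L x)) = (s (s x x) x) := (Eq.trans (Eq.trans (Eq.trans (Eq.trans (Eq.trans (Eq.trans (Eq.trans (Eq.trans (Eq.trans h109 (Eq.symm (congrArg₂ s (rfl : (s x x) = (s x x)) e108))) (Eq.symm h134)) (Eq.symm (Eq.symm (congrArg₂ s e41 (Eq.symm e23))))) (Eq.symm h87)) (Eq.symm (congrArg₂ s e23 (rfl : (s L x) = (s L x))))) (Eq.symm (Eq.symm h153))) (Eq.symm (Eq.symm (congrArg₂ s (rfl : x = x) e38)))) (Eq.symm (Eq.symm (congrArg₂ s (rfl : x = x) (Eq.symm e14))))) (Eq.symm h198)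)
  have e110 : (s (s x x) L) = (s (s L L) (s (s x x) L)) := (Eq.trans (Eq.trans (Eq.trans (Eq.trans (Eq.symm h173) (Eq.symm (Eq.symm (congrArg₂ s (rfl : (s L (s x x)) = (s L (s x x))) e50)))) (Eq.symm (Eq.symm h25))) (Eq.symm (congrArg₂ s (rfl : L = L) e91))) (Eq.symm h126))
  have e111 : (s (s (m x y) L) L) = (s (m x y) (s L L)) := h125
  have e112 : (s (m x y) (s (s x x) L)) = (s (s (m x y) L) (s L L)) := (Eq.trans (Eq.trans (Eq.trans (Eq.trans (congrArg₂ s (rfl : (m x y) = (m x y)) e110) (Eq.symm h44)) (Eq.symm (congrArg₂ s e111 (rfl : (s (s x x) L) = (s (s x x) L))))) h80) (congrArg₂ s (rfl : (s (m x y) L) = (s (m x y) L)) e90))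
  have e113 : (s (m L x) y) = (s L y) := (congrArg₂ s e0 (rfl : y = y))
  have e114 : (s (s (s x L) x) (s (s x x) L)) = (s L L) := (Eq.trans (Eq.trans (Eq.trans (Eq.trans (Eq.trans (Eq.trans (Eq.trans (Eq.trans (congrArg₂ s (rfl : (s (s x L) x) = (s (s x L) x)) e99) (Eq.symm h131)) (Eq.symm (congrArg₂ s e75 (rfl : (s L L) = (s L L))))) h135) (congrArg₂ s (rfl : (s (s x x) L) = (s (s x x) L)) e77)) (Eq.symm h84)) (congrArg₂ s e82 (rfl : L = L))) h20) h78)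
  have e115 : (s x (m x L)) = (m (s x x) (s (m x x) L)) := (Eq.symm h106)
  have e116 : (s (s x (m x L)) (s x x)) = (s (m (s x x) (s (m x x) L)) (s x x)) := (congrArg₂ s e115 (rfl : (s x x) = (s x x)))
  have e117 : (s (s x L) (s x (m x L))) = (s L (m x L)) := (Eq.trans (Eq.trans (Eq.trans (Eq.trans (Eq.trans (Eq.trans (Eq.trans (Eq.symm h101) (Eq.symm h105)) (Eq.symm (congrArg₂ s (Eq.symm e24) e79))) (Eq.symm h171)) (congrArg₂ s e92 (rfl : (m x L) = (m x L)))) h151) (congrArg₂ s (rfl : (s L L) = (s L L)) e93)) h119)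
  have e118 : (m L (m x L)) = L := (Eq.trans (Eq.trans (Eq.symm h45) (congrArg₂ m e0 (rfl : L = L))) h34)
  have e119 : (s x x) = (s (m L (m x L)) (s (s x L) x)) := (Eq.trans (Eq.trans (Eq.trans (Eq.trans (Eq.symm h64) (congrArg₂ s (rfl : (s L x) = (s L x)) e22)) h50) (congrArg₂ s (rfl : L = L) e23)) (Eq.symm (congrArg₂ s e118 (rfl : (s (s x L) x) = (s (s x L) x)))))
  have e120 : (s (m x L) (s (s x L) x)) = (s L x) := (Eq.trans (Eq.trans (Eq.trans (Eq.trans (Eq.trans (Eq.trans (Eq.trans (Eq.trans (Eq.trans (Eq.trans (Eq.trans (Eq.trans (Eq.trans (Eq.trans (Eq.trans (Eq.trans (Eq.trans (Eq.trans (Eq.trans (Eq.trans (Eq.symm h52) (Eq.symm (congrArg₂ s e117 e119))) (Eq.symm (Eq.symm h82))) (Eq.symm (Eq.symm (congrArg₂ s (Eq.symm e41) e116)))) (Eq.symm (Eq.symm h56))) (Eq.symm (Eq.symm h137))) (Eq.symm (Eq.symm (congrArg₂ s (rfl : (m x x) = (m x x)) e62)))) (Eq.symm h48)) (Eq.symm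 h63)) (Eq.symm (congrArg₂ s e14 e61))) (Eq.symm h146)) (Eq.symm (Eq.symm (congrArg₂ s e36 (rfl : (s L x) = (s L x)))))) (Eq.symm (Eq.symm h86))) (Eq.symm (Eq.symm (congrArg₂ s (rfl : (s (s x x) x) = (s (s x x) x)) e60)))) (Eq.symm h49)) (Eq.symm (congrArg₂ s e85 (rfl : x = x)))) (Eq.symm (Eq.symm h196))) (Eq.symm (Eq.symm (congrArg₂ s (rfl : (s (s x L) x) = (s (s x L) x)) e84)))) (Eq.symm h183)) (Eq.symm (Eq.symm (congrArg₂ s e83 e4)))) (Eq.symm (Eq.symm h0)))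
  have e121 : (s (s x x) L) = (s (m L x) (s L L)) := (Eq.trans (Eq.trans (Eq.trans (Eq.trans (Eq.trans (Eq.symm h173) (Eq.symm (Eq.symm (congrArg₂ s (rfl : (s L (s x x)) = (s L (s x x))) e50)))) (Eq.symm (Eq.symm h25))) (Eq.symm (congrArg₂ s (rfl : L = L) e91))) (Eq.symm (Eq.symm (congrArg₂ s e8 e90)))) (Eq.symm (congrArg₂ s e6 (rfl : (s L L) = (s L L)))))
  have e122 : (s (s L x) L) = (s (m x L) (s L L)) := (Eq.trans (Eq.trans (Eq.trans (Eq.trans (Eq.symm h81) (Eq.symm (congrArg₂ s e5 e9))) (Eq.symm (congrArg₂ s e120 e121))) (Eq.symm (Eq.symm h159))) (Eq.symm (Eq.symm (congrArg₂ s (rfl : (m x L) = (m x L)) e114))))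
  have e123 : (s L y) = (s (m L (s x (m x L))) y) := (Eq.symm (congrArg₂ s e33 (rfl : y = y)))
  have e124 : (s L (s L y)) = (s (s x (m x L)) y) := (Eq.trans (Eq.trans (Eq.trans (Eq.symm h70) (Eq.symm h181)) (congrArg₂ s (Eq.symm e32) e123)) h148)
  have e125 : (s x y) = (s (s L x) (s L y)) := (Eq.trans (Eq.symm h123) (congrArg₂ s (rfl : (s L x) = (s L x)) e113))
  have e126 : (s (s x x) (s (m x x) y)) = (s (s L x) (s L y)) := (Eq.trans (Eq.trans h38 (Eq.symm h123)) (congrArg₂ s (rfl : (s L x) = (s L x)) e113))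
  have e127 : (s (m (s x x) (s (m x x) x)) y) = (s x (s (m x x) y)) := (Eq.trans (congrArg₂ s (Eq.symm e15) (rfl : y = y)) h122)
  have e128 : (s (s L L) y) = (s L (s L y)) := h132
  have e129 : (s x (s L L)) = (s (s L x) L) := (Eq.trans (Eq.trans (Eq.symm h112) (congrArg₂ s e5 e9)) h81)
  have e130 : (s x y) = (s (s x L) (s L y)) := (Eq.trans (Eq.trans (Eq.trans (Eq.trans (Eq.trans (Eq.trans (Eq.symm h123) (congrArg₂ s (rfl : (s L x) = (s L x)) e113)) (Eq.symm h120)) (Eq.symm (congrArg₂ s e129 (rfl : y = y)))) (Eq.symm (Eq.symm h202))) (Eq.symm (Eq.symm (congrArg₂ s (rfl : x = x) e128)))) (Eq.symm h104))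
  have e131 : (s (s L L) y) = (s (s x x) y) := (Eq.trans (Eq.trans (Eq.trans (Eq.trans (Eq.trans (Eq.trans (Eq.trans (Eq.trans (Eq.trans (Eq.trans (Eq.trans (Eq.trans (Eq.trans (Eq.trans (Eq.trans (Eq.trans (Eq.trans (Eq.trans (Eq.trans (Eq.trans h132 (Eq.symm h70)) (Eq.symm h181)) (congrArg₂ s (Eq.symm e32) e123)) h148) (congrArg₂ s e95 (rfl : y = y))) h69) (Eq.symm (congrArg₂ s (rfl : (s (m x x) x) = (s (m x x) x)) e124))) (Eq.symm h136)) (congrArg₂ s e101 (rfl : (s L y) = (s L y)))) h9) (Eq.symm (congrArg₂ s (rfl : (m x x) = (m x x)) e130))) (Eq.symm h14)) (Eq.symm h138)) (Eq.symm (Eq.symm (congrArg₂ s (Eq.symm e14) e127)))) (Eq.symm h1)) (Eq.symm (congrArg₂ s (Eq.symm e13) (rfl : (s (m x x) y) = (s (m x x) y))))) (Eq.symm (Eq.symm h31))) (Eq.symm (Eq.symm (congrArg₂ s (rfl : x = x) e126)))) (Eq.symm (congrArg₂ s (rfl : x = x) e125))) (Eq.symm h190))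
  have e132 : (s (s x x) y) = (s (s (s x L) x) (s L y)) := (Eq.trans (Eq.trans (Eq.trans h190 (congrArg₂ s (rfl : x = x) e125)) (Eq.symm h28)) (Eq.symm (Eq.symm (congrArg₂ s e23 (rfl : (s L y) = (s L y))))))
  have e133 : (s (m L L) y) = (s L y) := (congrArg₂ s (Eq.symm e3) (rfl : y = y))
  have e134 : (s (s (s x x) L) y) = (s L y) := (Eq.trans (Eq.trans (Eq.trans (Eq.trans (Eq.trans (Eq.symm (congrArg₂ s (Eq.symm e51) (rfl : y = y))) (Eq.symm (Eq.symm h161))) (Eq.symm (congrArg₂ s (rfl : (s (s x L) x) = (s (s x L) x)) (Eq.symm e128)))) (Eq.symm h185)) (Eq.symm (congrArg₂ s (Eq.symm e83) e133))) (Eq.symm (Eq.symm h201)))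
  have e135 : (s (m L (m x L)) (s (s x x) y)) = (s (m L (m x L)) y) := (Eq.trans (Eq.trans (Eq.trans (Eq.trans (Eq.trans (Eq.trans (Eq.trans (Eq.trans (Eq.trans (Eq.trans (Eq.trans (congrArg₂ s e118 e132) (Eq.symm h6)) (Eq.symm (congrArg₂ s (Eq.symm e24) e134))) (Eq.symm h98)) (Eq.symm (congrArg₂ s (Eq.symm e66) (rfl : y = y)))) (Eq.symm (congrArg₂ s (Eq.symm e51) (rfl : y = y)))) (Eq.symm (Eq.symm h161))) (Eq.symm (congrArg₂ s (rfl : (s (s x L) x) = (s (s x L) x)) (Eq.symm e128)))) (Eq.symm h185)) (Eq.symm (congrArg₂ s (Eq.symm e83) e133))) (Eq.symm (Eq.symm h201))) (Eq.symm (congrArg₂ s e118 (rfl : y = y))))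
  have e136 : (s x y) = (s (m x L) y) := (Eq.trans (Eq.trans (Eq.trans (Eq.trans (Eq.trans (Eq.trans (Eq.trans (Eq.trans (Eq.symm h123) (congrArg₂ s (rfl : (s L x) = (s L x)) e113)) (Eq.symm h120)) (congrArg₂ s e122 (rfl : y = y))) h75) (congrArg₂ s (rfl : (m x L) = (m x L)) e131)) (Eq.symm h54)) (congrArg₂ s (rfl : (s L (m x L)) = (s L (m x L))) e135)) h35)
  have e137 : (m L y) = L := h72
  have e138 : (m x L) = (m (m x L) y) := (Eq.trans (Eq.symm (congrArg₂ m (rfl : x = x) e137)) (Eq.symm h91))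
  have e139 : (s (m L (m x L)) L) = (s (m L (m x L)) (s (s x x) L)) := (Eq.trans (Eq.trans (Eq.trans (Eq.trans (Eq.trans (Eq.trans (Eq.trans (Eq.trans (Eq.trans (Eq.trans (Eq.trans (Eq.trans (Eq.trans (Eq.trans (congrArg₂ s e118 (rfl : L = L)) (Eq.symm h78)) (Eq.symm h20)) (Eq.symm (congrArg₂ s e82 (rfl : L = L)))) (Eq.symm (Eq.symm h84))) (Eq.symm (congrArg₂ s (rfl : (s (s x x) L) = (s (s x x) L)) e77))) (Eq.symm h135)) (Eq.symm (Eq.symm (congrArg₂ s e75 (rfl : (s L L) = (s L L)))))) (Eq.symm (Eq.symm (congrArg₂ s e53 e74)))) (Eq.symm (Eq.symm h95))) (Eq.symm (Eq.symm h155))) (Eq.symm (Eq.symm (congrArg₂ s (Eq.symm e24) (rfl : (s L L) = (s L L)))))) (Eq.symm (Eq.symm h15))) (Eq.symm (congrArg₂ s (rfl : L = L) e51))) (Eq.symm (congrArg₂ s e118 (rfl : (s (s x x) L) = (s (s x x) L)))))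
  have e140 : (s (m x L) (s L L)) = (s L (s x L)) := (Eq.trans (Eq.trans (Eq.trans (Eq.trans (Eq.trans (Eq.symm (congrArg₂ s (rfl : (m x L) = (m x L)) e114)) (Eq.symm h159)) (congrArg₂ s e120 e121)) (congrArg₂ s e5 e9)) h81) (Eq.symm (Eq.symm h19)))
  have e141 : (s x L) = (s (m (m x L) y) L) := (Eq.trans (Eq.trans (Eq.trans (Eq.trans (Eq.trans (Eq.trans (Eq.trans (Eq.trans (Eq.trans (Eq.trans (Eq.trans (Eq.symm h107) (Eq.symm (congrArg₂ s e24 (rfl : (s (m x x) L) = (s (m x x) L))))) h144) (Eq.symm (Eq.symm (congrArg₂ s (rfl : L = L) e30)))) (Eq.symm h23)) (Eq.symm (congrArg₂ s e140 (rfl : L = L)))) (Eq.symm (Eq.symm h199))) (Eq.symm (Eq.symm (congrArg₂ s (rfl : (m x L) = (m x L)) (Eq.symm e92))))) (Eq.symm h99)) (Eq.symm (congrArg₂ s (rfl : (s L (m x L)) = (s L (m x L))) e139))) (Eq.symm (Eq.symm h117))) (Eq.symm (Eq.symm (congrArg₂ s e138 (rfl : L = L)))))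
  have e142 : (s (s x y) (s (m x y) L)) = (s (s x y) (s x L)) := (Eq.trans (Eq.trans h193 (Eq.symm h18)) (Eq.symm (congrArg₂ s e136 e141)))
  have e143 : (s (m L x) (m y L)) = (s L (m y L)) := (congrArg₂ s e0 (rfl : (m y L) = (m y L)))
  have e144 : (s (m x L) (s (s x x) y)) = (s x y) := (Eq.trans (Eq.trans (Eq.trans (Eq.trans (Eq.trans (Eq.symm (congrArg₂ s (rfl : (m x L) = (m x L)) e131)) (Eq.symm h75)) (Eq.symm (congrArg₂ s e122 (rfl : y = y)))) (Eq.symm (Eq.symm h120))) (Eq.symm (congrArg₂ s (rfl : (s L x) = (s L x)) e113))) (Eq.symm (Eq.symm h123)))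
  have e145 : (m L (s (s x x) y)) = L := h39
  have e146 : (m (m x L) (s (s x x) y)) = (m x L) := (Eq.trans h121 (congrArg₂ m (rfl : x = x) e145))
  have e147 : (s (m (m x L) (s (s x x) y)) (s (s x x) L)) = (s x L) := (Eq.trans (Eq.trans (Eq.trans (Eq.trans (Eq.trans (Eq.trans (Eq.trans (Eq.trans (congrArg₂ s e146 (rfl : (s (s x x) L) = (s (s x x) L))) (Eq.symm (congrArg₂ s (rfl : (m x L) = (m x L)) (Eq.symm e92)))) (Eq.symm h199)) (congrArg₂ s e140 (rfl : L = L))) h23) (Eq.symm (congrArg₂ s (rfl : L = L) e30))) (Eq.symm h144)) (Eq.symm (Eq.symm (congrArg₂ s e24 (rfl : (s (m x x) L) = (s (m x x) L)))))) (Eq.symm (Eq.symm h107)))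
  have e148 : (s (s x x) y) = (s L (s L y)) := (Eq.trans (Eq.trans (Eq.trans (Eq.trans (Eq.trans (Eq.trans (Eq.trans (Eq.trans (Eq.trans (Eq.trans (Eq.trans (Eq.trans (Eq.trans (Eq.trans (Eq.trans (Eq.trans (Eq.trans (Eq.trans (Eq.trans h190 (congrArg₂ s (rfl : x = x) e125)) (Eq.symm (congrArg₂ s (rfl : x = x) e126))) (Eq.symm h31)) (congrArg₂ s (Eq.symm e13) (rfl : (s (m x x) y) = (s (m x x) y)))) h1) (Eq.symm (congrArg₂ s (Eq.symm e14) e127))) h138) h14) (congrArg₂ s (rfl : (m x x) = (m x x)) e130)) (Eq.symm h9)) (Eq.symm (congrArg₂ s e101 (rfl : (s L y) = (s L y))))) (Eq.symm (Eq.symm h136))) (Eq.symm (Eq.symm (congrArg₂ s (rfl : (s (m x x) x) = (s (m x x) x)) e124)))) (Eq.symm h69)) (Eq.symm (congrArg₂ s e95 (rfl : y = y)))) (Eq.symm h148)) (Eq.symm (congrArg₂ s (Eq.symm e32) e123))) (Eq.symm (Eq.symm h181))) (Eq.symm (Eq.symm h70)))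
  have e149 : (s (s x x) L) = (s (m L (s L y)) (s L L)) := (Eq.trans (Eq.trans (Eq.trans (Eq.trans (Eq.symm h173) (Eq.symm (Eq.symm (congrArg₂ s (rfl : (s L (s x x)) = (s L (s x x))) e50)))) (Eq.symm (Eq.symm h25))) (Eq.symm (congrArg₂ s (rfl : L = L) e91))) (Eq.symm (Eq.symm (congrArg₂ s e8 e90))))
  have e150 : (s (m L y) L) = (s L L) := (congrArg₂ s e137 (rfl : L = L))
  have e151 : (s L (m y L)) = (m (s L y) (s L L)) := (Eq.trans (Eq.symm h129) (congrArg₂ m (rfl : (s L y) = (s L y)) e150))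
  have e152 : (m (s (s x x) y) (s (s x x) L)) = (s (s L L) (m y L)) := (Eq.trans (Eq.trans (Eq.trans (congrArg₂ m e148 e149) h12) (Eq.symm (congrArg₂ s (rfl : L = L) e151))) (Eq.symm h59))
  have e153 : (m (s x y) (s (m x y) L)) = (m (s x y) (s x L)) := (Eq.trans (Eq.trans (Eq.trans (Eq.trans (Eq.trans (Eq.trans (Eq.trans (Eq.trans h200 (Eq.symm h168)) (congrArg₂ s (rfl : (s L x) = (s L x)) e143)) (Eq.symm h55)) (congrArg₂ s e122 (rfl : (m y L) = (m y L)))) h5) (Eq.symm (congrArg₂ s (rfl : (m x L) = (m x L)) e152))) (Eq.symm h103)) (Eq.symm (Eq.symm (congrArg₂ m e144 e147))))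
  have e154 : (s (m (s x y) (s (m x y) L)) (s L x)) = (s (m (s x y) (s x L)) (s L x)) := (congrArg₂ s e153 (rfl : (s L x) = (s L x)))
  have e155 : (s x x) = (s (m x y) x) := (Eq.trans (Eq.trans (Eq.trans (Eq.trans (Eq.trans (Eq.trans (Eq.trans (Eq.trans (Eq.trans (Eq.trans (Eq.trans (Eq.trans (Eq.trans (Eq.trans (Eq.trans (Eq.trans (Eq.trans (Eq.trans (Eq.trans (Eq.trans (Eq.trans (Eq.trans (Eq.trans (Eq.trans (Eq.trans (Eq.symm h64) (congrArg₂ s (rfl : (s L x) = (s L x)) e22)) h50) (congrArg₂ s (rfl : L = L) e23)) (Eq.symm h96)) (congrArg₂ s e67 (rfl : x = x))) h60) (Eq.symm (congrArg₂ s (rfl : (s (s x x) L) = (s (s x x) L)) e23))) (Eq.symm h209)) (congrArg₂ s e68 (rfl : (s L x) = (s L x)))) h188) (congrArg₂ s (rfl : (s x x) = (s x x)) e27)) h100) (congrArg₂ s (rfl : x = x) e103)) (Eq.symm h67)) (Eq.symm h30)) (Eq.symm (congrArg₂ s e142 e154))) (Eq.symm (Eq.symm h43))) (Eq.symm (congrArg₂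 s (rfl : (s (m x y) L) = (s (m x y) L)) (Eq.symm e5)))) (Eq.symm h66)) (Eq.symm (congrArg₂ s e112 (rfl : (s L x) = (s L x))))) (Eq.symm (Eq.symm h89))) (Eq.symm (Eq.symm (congrArg₂ s (rfl : (m x y) = (m x y)) e109)))) (Eq.symm h76)) (Eq.symm (congrArg₂ s (rfl : (s L (m x y)) = (s L (m x y))) e107))) (Eq.symm (Eq.symm h195)))
  have e156 : (s x (s x z)) = (s (s x x) z) := (Eq.symm h154)
  have e157 : (s (s x x) z) = (s (s (s x L) x) (s L z)) := (Eq.trans (Eq.trans (Eq.trans h154 (congrArg₂ s (rfl : x = x) e11)) (Eq.symm h47)) (Eq.symm (Eq.symm (congrArg₂ s e23 (rfl : (s L z) = (s L z))))))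
  have e158 : (s (s x (m x L)) z) = (s (s x x) z) := (Eq.trans (Eq.trans (Eq.trans (Eq.trans (Eq.trans (Eq.trans (Eq.trans (Eq.trans (Eq.trans (Eq.trans (Eq.trans (Eq.trans (Eq.trans (Eq.trans (Eq.trans (congrArg₂ s e95 (rfl : z = z)) h16) (Eq.symm (congrArg₂ s (rfl : (s (m x x) x) = (s (m x x) x)) e96))) (Eq.symm h141)) (congrArg₂ s e101 (rfl : (s L z) = (s L z)))) h36) (Eq.symm (congrArg₂ s (rfl : (m x x) = (m x x)) e18))) (Eq.symm h62)) (Eq.symm h152)) (Eq.symm (congrArg₂ s e14 e16))) (Eq.symm h206)) (Eq.symm (Eq.symm (congrArg₂ s e13 (rfl : (s (m x x) z) = (s (m x x) z)))))) (Eq.symm (Eq.symm h124))) (Eq.symm (Eq.symm (congrArg₂ s (rfl : x = x) e12)))) (Eq.symm (congrArg₂ s (rfl : x = x) e11))) (Eq.symm h154))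
  have e159 : (s (m L (s (s x x) L)) z) = (s (s (s x x) L) (s (s x x) z)) := (Eq.trans (Eq.trans (Eq.trans (Eq.trans (Eq.trans (Eq.trans (congrArg₂ s e73 (rfl : z = z)) (Eq.symm h13)) (Eq.symm h46)) (Eq.symm (congrArg₂ s e82 (rfl : z = z)))) h108) (congrArg₂ s e110 e158)) (Eq.symm (congrArg₂ s e110 (rfl : (s (s x x) z) = (s (s x x) z)))))
  have e160 : (s (s (s x x) L) z) = (s L z) := (Eq.trans (Eq.trans (Eq.trans (Eq.trans (Eq.trans (Eq.trans (Eq.trans (Eq.symm h166) (Eq.symm (Eq.symm (congrArg₂ s e90 e159)))) (Eq.symm h41)) (Eq.symm (congrArg₂ s e110 e158))) (Eq.symm h108)) (Eq.symm (Eq.symm (congrArg₂ s e82 (rfl : z = z))))) (Eq.symm (Eq.symm h46))) (Eq.symm (Eq.symm h13)))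
  have e161 : (s (m L (m x y)) (s (s x x) z)) = (s (m L (m x y)) z) := (Eq.trans (Eq.trans (Eq.trans (Eq.trans (Eq.trans (Eq.trans (Eq.trans (Eq.trans (Eq.trans (Eq.trans (Eq.trans (Eq.trans (Eq.trans (congrArg₂ s (Eq.symm e105) e157) (Eq.symm h2)) (Eq.symm (congrArg₂ s (Eq.symm e24) e160))) (Eq.symm h40)) (Eq.symm (congrArg₂ s (Eq.symm e66) (rfl : z = z)))) (Eq.symm h166)) (Eq.symm (Eq.symm (congrArg₂ s e90 e159)))) (Eq.symm h41)) (Eq.symm (congrArg₂ s e110 e158))) (Eq.symm h108)) (Eq.symm (Eq.symm (congrArg₂ s e82 (rfl : z = z))))) (Eq.symm (Eq.symm h46))) (Eq.symm (Eq.symm h13))) (Eq.symm (congrArg₂ s (Eq.symm e105) (rfl : z = z))))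
  have e162 : (s (m x y) z) = (s x z) := (Eq.trans (Eq.trans (Eq.trans (Eq.trans (Eq.trans (Eq.trans (Eq.trans (Eq.trans (Eq.trans (Eq.trans (Eq.trans (Eq.trans (Eq.trans (Eq.trans (Eq.symm h33) (Eq.symm (congrArg₂ s (rfl : (s L (m x y)) = (s L (m x y))) e161))) (Eq.symm (Eq.symm h97))) (Eq.symm (congrArg₂ s (rfl : (m x y) = (m x y)) e156))) (Eq.symm h163)) (Eq.symm (congrArg₂ s e155 (rfl : (s x z) = (s x z))))) (Eq.symm (Eq.symm h192))) (Eq.symm (Eq.symm (congrArg₂ s (rfl : x = x) e102)))) (Eq.symm h21)) (Eq.symm (congrArg₂ s e10 (rfl : z = z)))) (Eq.symm (Eq.symm h177))) (Eq.symm (Eq.symm (congrArg₂ s (rfl : L = L) e2)))) (Eq.symm h110)) (Eq.symm (congrArg₂ s (rfl : (s L x) = (s L x)) e1))) (Eq.symm (Eq.symm h130)))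
  exact e162
end

section
/- An associative pentagon algebra (S,·,∗) is right-trivially distributive (i.e., (x·y)∗z = y∗z for all x,y,z ∈ S) if and only if (S,∗) satisfies the identity x∗y∗z = y∗z for all x,y,z ∈ S (i.e., (S,∗) is a Q_1-semigroup). -/
theorem stmt18 {S : Type*} (m s : S → S → S)
    (hm : ∀ a b c : S, m (m a b) c = m a (m b c))
    (hs : ∀ a b c : S, s (s a b) c = s a (s b c))
    (hI : ∀ a b c : S, m (s a b) (s (m a b) c) = s a (m b c))
    (hII : ∀ a b c : S, s (s a b) (s (m a b) c) = s b c) :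
    (∀ x y z : S, s (m x y) z = s y z) ↔
    (∀ x y z : S, s x (s y z) = s y z) := by
  constructor
  · intro RT x y z
    -- key1 : s (s a b) (s b c) = s b c
    have key1 : ∀ a b c : S, s (s a b) (s b c) = s b c := by
      intro a b c
      have := hII a b c
      rwa [RT a b c] at this
    -- indep : s a (s c z) = s b (s c z)
    have indep : ∀ a b c z : S, s a (s c z) = s b (s c z) := by
      intro a b c z
      have h1 : m (s a b) (s b c) = s a (m b c) := by
        have := hI a b c; rwa [RT a b c] at this
      have h2 : s (m (s a b) (s b c)) z = s (s b c) z := RT _ _ _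
      rw [h1] at h2
      have h3 : s (s a (m b c)) z = s a (s (m b c) z) := hs _ _ _
      rw [h3, RT b c z] at h2
      rw [hs] at h2
      -- h2 : s a (s c z) = s b (s c z)
      exact h2
    calc s x (s y z) = s (s y y) (s y z) := indep x (s y y) y z
      _ = s y z := key1 y y z
  · intro Q x y z
    have := hII x y z
    rwa [Q (s x y) (m x y) z] at this
end
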